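/- arXiv:2405.04268 — 9 statements merged into one kernel-verified Lean document; each statement's English description precedes it below -/
import Mathlib

section
/- Fix real numbers a₁₁, a₂₂ and positive reals a₁₂, a₂₁, d₁, d₂, and let j₁, j₂ : [0,l] → ℝ with j_i(x) = ∫_0^∞ J_i(x-y) dy for kernels J₁, J₂ satisfying (J). Define β(x) = ( -(d₁ j₁(x) - a₁₁ + d₂ j₂(x) - a₂₂) + √((d₁ j₁(x) - a₁₁ - d₂ j₂(x) + a₂₂)² + 4 a₁₂ a₂₁) ) / 2, the larger eigenvalue of the matrix H(x) = [[-d₁ j₁(x) + a₁₁, a₁₂],[a₂₁, -d₂ j₂(x) + a₂₂]]. Then β is nonincreasing on [0,l] and β'(0) < 0. -/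
open MeasureTheory Set

/-!
Substituting `u = x - y` gives `jᵢ x = ∫ u in Iic x, Jᵢ u`, so `jᵢ` is nondecreasing with
`jᵢ' 0 = Jᵢ 0 > 0`. The larger eigenvalue `(-(p + q) + √((p - q)² + c)) / 2` is nonincreasing in
each diagonal entry because `s ↦ √(s² + c)` is 1-Lipschitz, and for `c > 0` its partial
derivatives `(-1 ± (p - q) / √((p - q)² + c)) / 2` are strictly negative.
-/

theorem setIntegral_Ioi_zero_comp_sub (J : ℝ → ℝ) (x : ℝ) :
    ∫ y in Ioi (0 : ℝ), J (x - y) = ∫ u in Iic x, J u := by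
  rw [← (Measure.measurePreserving_sub_left volume x).setIntegral_preimage_emb
    (measurableEmbedding_subLeft x) J (Iic x), ← integral_Ici_eq_integral_Ioi]
  congr 2
  ext y
  simp

theorem monotone_setIntegral_Iic {J : ℝ → ℝ} (hJ : Integrable J) (hJ_nonneg : 0 ≤ J) :
    Monotone fun x => ∫ u in Iic x, J u := fun _ _ hxy =>
  setIntegral_mono_set hJ.integrableOn (.of_forall hJ_nonneg)
    (Iic_subset_Iic.2 hxy).eventuallyLE

theorem hasDerivAt_setIntegral_Iic {J : ℝ → ℝ} {x : ℝ} (hJ : Integrable J)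
    (hJx : ContinuousAt J x) : HasDerivAt (fun y => ∫ u in Iic y, J u) (J x) x := by
  have hsplit : (fun y => ∫ u in Iic y, J u) =
      fun y => (∫ u in Iic x, J u) + ∫ u in x..y, J u := by
    funext y
    rw [← intervalIntegral.integral_Iic_sub_Iic hJ.integrableOn hJ.integrableOn]
    ring
  rw [hsplit]
  exact (intervalIntegral.integral_hasDerivAt_right hJ.intervalIntegrable
    hJ.aestronglyMeasurable.stronglyMeasurableAtFilter hJx).const_add _

theorem Real.sqrt_sq_add_le_sqrt_sq_add_add_abs_sub (s t : ℝ) {c : ℝ} (hc : 0 ≤ c) :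
    √(s ^ 2 + c) ≤ √(t ^ 2 + c) + |s - t| := by
  set S := √(t ^ 2 + c)
  have hS : S ^ 2 = t ^ 2 + c := Real.sq_sqrt (by positivity)
  have htS : |t| ≤ S := Real.abs_le_sqrt (by linarith)
  have hcross : t * (s - t) ≤ S * |s - t| :=
    calc t * (s - t) ≤ |t| * |s - t| := by rw [← abs_mul]; exact le_abs_self _
      _ ≤ S * |s - t| := by gcongr
  rw [Real.sqrt_le_iff]
  refine ⟨by positivity, ?_⟩
  nlinarith [sq_abs (s - t)]

/-- For `c = 4ab`, the larger eigenvalue of the matrix `!![-p, a; b, -q]`. -/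
noncomputable def largerEigenvalue (p q c : ℝ) : ℝ :=
  (-(p + q) + √((p - q) ^ 2 + c)) / 2

theorem largerEigenvalue_anti {p₁ p₂ q₁ q₂ c : ℝ} (hp : p₁ ≤ p₂) (hq : q₁ ≤ q₂) (hc : 0 ≤ c) :
    largerEigenvalue p₂ q₂ c ≤ largerEigenvalue p₁ q₁ c := by
  have hlip := Real.sqrt_sq_add_le_sqrt_sq_add_add_abs_sub (p₂ - q₂) (p₁ - q₁) hc
  have habs : |p₂ - q₂ - (p₁ - q₁)| ≤ (p₂ - p₁) + (q₂ - q₁) := by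
    rw [abs_le]; constructor <;> linarith
  unfold largerEigenvalue
  linarith

theorem HasDerivAt.largerEigenvalue {p q : ℝ → ℝ} {p' q' c x : ℝ} (hp : HasDerivAt p p' x)
    (hq : HasDerivAt q q' x) (hc : 0 < c) :
    HasDerivAt (fun y => largerEigenvalue (p y) (q y) c)
      ((-(p' + q') + (p x - q x) * (p' - q') / √((p x - q x) ^ 2 + c)) / 2) x := by
  have hpos : (p x - q x) ^ 2 + c ≠ 0 := by positivity
  have hsqrt : HasDerivAt (fun y => √((p y - q y) ^ 2 + c))
      ((p x - q x) * (p' - q') / √((p x - q x) ^ 2 + c)) x := by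
    convert (((hp.fun_sub hq).fun_pow 2).add_const c).sqrt hpos using 1
    field_simp
    ring
  exact ((hp.fun_add hq).fun_neg.add hsqrt).div_const 2

theorem deriv_largerEigenvalue_neg {p q : ℝ → ℝ} {p' q' c x : ℝ} (hp : HasDerivAt p p' x)
    (hq : HasDerivAt q q' x) (hp' : 0 < p') (hq' : 0 < q') (hc : 0 < c) :
    deriv (fun y => largerEigenvalue (p y) (q y) c) x < 0 := by
  rw [(hp.largerEigenvalue hq hc).deriv]
  set S := √((p x - q x) ^ 2 + c)
  have hS : 0 < S := Real.sqrt_pos.2 (by positivity)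
  have hpqS : |p x - q x| ≤ S := Real.abs_le_sqrt (le_add_of_nonneg_right hc.le)
  have habs : |p' - q'| < p' + q' := by rw [abs_lt]; constructor <;> linarith
  have hnum : (p x - q x) * (p' - q') < S * (p' + q') :=
    calc (p x - q x) * (p' - q') ≤ |p x - q x| * |p' - q'| := by
          rw [← abs_mul]; exact le_abs_self _
      _ ≤ S * |p' - q'| := by gcongr
      _ < S * (p' + q') := by gcongr
  have : (p x - q x) * (p' - q') / S < p' + q' := by rwa [div_lt_iff₀' hS]
  linarith

theorem stmt_2_general (a11 a22 a12 a21 d1 d2 l : ℝ)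
    (ha12 : 0 < a12) (ha21 : 0 < a21) (hd1 : 0 < d1) (hd2 : 0 < d2)
    (J1 J2 : ℝ → ℝ)
    (hJ1c : Continuous J1) (hJ1nn : ∀ x, 0 ≤ J1 x)
    (hJ10 : 0 < J1 0) (hJ1int : ∫ x, J1 x = 1)
    (hJ2c : Continuous J2) (hJ2nn : ∀ x, 0 ≤ J2 x)
    (hJ20 : 0 < J2 0) (hJ2int : ∫ x, J2 x = 1)
    (j1 j2 : ℝ → ℝ)
    (hj1 : ∀ x, j1 x = ∫ y in Ioi (0:ℝ), J1 (x - y))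
    (hj2 : ∀ x, j2 x = ∫ y in Ioi (0:ℝ), J2 (x - y))
    (β : ℝ → ℝ)
    (hβ : ∀ x, β x = (-(d1 * j1 x - a11 + d2 * j2 x - a22)
      + Real.sqrt ((d1 * j1 x - a11 - d2 * j2 x + a22) ^ 2 + 4 * a12 * a21)) / 2) :
    AntitoneOn β (Icc 0 l) ∧ deriv β 0 < 0 := by
  have hI1 : Integrable J1 := .of_integral_ne_zero (by simp [hJ1int])
  have hI2 : Integrable J2 := .of_integral_ne_zero (by simp [hJ2int])
  have hj1_Iic : j1 = fun x => ∫ u in Iic x, J1 u := by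
    funext x; rw [hj1, setIntegral_Ioi_zero_comp_sub]
  have hj2_Iic : j2 = fun x => ∫ u in Iic x, J2 u := by
    funext x; rw [hj2, setIntegral_Ioi_zero_comp_sub]
  have hβ_eig : β = fun x =>
      largerEigenvalue (d1 * j1 x - a11) (d2 * j2 x - a22) (4 * a12 * a21) := by
    funext x; rw [hβ, largerEigenvalue]; ring_nf
  have hmono1 : Monotone j1 := hj1_Iic ▸ monotone_setIntegral_Iic hI1 hJ1nn
  have hmono2 : Monotone j2 := hj2_Iic ▸ monotone_setIntegral_Iic hI2 hJ2nn
  have hderiv1 : HasDerivAt j1 (J1 0) 0 := hj1_Iic ▸ hasDerivAt_setIntegral_Iic hI1 hJ1c.continuousAt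
  have hderiv2 : HasDerivAt j2 (J2 0) 0 := hj2_Iic ▸ hasDerivAt_setIntegral_Iic hI2 hJ2c.continuousAt
  refine ⟨?_, ?_⟩
  · refine Antitone.antitoneOn (fun x y hxy => ?_) _
    rw [hβ_eig]
    exact largerEigenvalue_anti (by nlinarith [hmono1 hxy]) (by nlinarith [hmono2 hxy])
      (by positivity)
  · rw [hβ_eig]
    exact deriv_largerEigenvalue_neg ((hderiv1.const_mul d1).sub_const a11)
      ((hderiv2.const_mul d2).sub_const a22) (by positivity) (by positivity) (by positivity)

theorem stmt_2 (a11 a22 a12 a21 d1 d2 l : ℝ)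
    (ha12 : 0 < a12) (ha21 : 0 < a21) (hd1 : 0 < d1) (hd2 : 0 < d2) (hl : 0 < l)
    (J1 J2 : ℝ → ℝ)
    (hJ1c : Continuous J1) (hJ1b : ∃ C, ∀ x, J1 x ≤ C) (hJ1nn : ∀ x, 0 ≤ J1 x)
    (hJ10 : 0 < J1 0) (hJ1even : ∀ x, J1 (-x) = J1 x) (hJ1int : ∫ x, J1 x = 1)
    (hJ2c : Continuous J2) (hJ2b : ∃ C, ∀ x, J2 x ≤ C) (hJ2nn : ∀ x, 0 ≤ J2 x)
    (hJ20 : 0 < J2 0) (hJ2even : ∀ x, J2 (-x) = J2 x) (hJ2int : ∫ x, J2 x = 1)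
    (j1 j2 : ℝ → ℝ)
    (hj1 : ∀ x, j1 x = ∫ y in Ioi (0:ℝ), J1 (x - y))
    (hj2 : ∀ x, j2 x = ∫ y in Ioi (0:ℝ), J2 (x - y))
    (β : ℝ → ℝ)
    (hβ : ∀ x, β x = (-(d1 * j1 x - a11 + d2 * j2 x - a22)
      + Real.sqrt ((d1 * j1 x - a11 - d2 * j2 x + a22) ^ 2 + 4 * a12 * a21)) / 2) :
    AntitoneOn β (Icc 0 l) ∧ deriv β 0 < 0 :=
  stmt_2_general a11 a22 a12 a21 d1 d2 l ha12 ha21 hd1 hd2 J1 J2 hJ1c hJ1nn hJ10 hJ1int hJ2c hJ2nn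
    hJ20 hJ2int j1 j2 hj1 hj2 β hβ
end

section
/- Let a, b > 0 and H, G ∈ C¹([0,∞)) with H(0)=G(0)=0, H'(z) > 0 and G'(z) > 0 on [0,∞), H(z)/z nonincreasing in z > 0, G(z)/z strictly decreasing in z > 0, and G(H(ẑ)/a) < b ẑ for some ẑ > 0. If H'(0) G'(0)/(a b) > 1, then there exists a unique pair (U,V) with U > 0, V > 0 satisfying a U = H(V) and b V = G(U). -/
open Set Filter Topology

theorem Convex.strictMonoOn_of_hasDerivWithinAt_pos {D : Set ℝ} (hD : Convex ℝ D)
    {f f' : ℝ → ℝ}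
    (hf : ∀ x ∈ D, HasDerivWithinAt f (f' x) D x) (hf' : ∀ x ∈ D, 0 < f' x) :
    StrictMonoOn f D :=
  _root_.strictMonoOn_of_hasDerivWithinAt_pos hD (fun x hx => (hf x hx).continuousWithinAt)
    (fun x hx => (hf x (interior_subset hx)).mono interior_subset)
    (fun x hx => hf' x (interior_subset hx))

theorem HasDerivWithinAt.eventually_lt_of_pos {f : ℝ → ℝ} {f' x : ℝ}
    (hf : HasDerivWithinAt f f' (Ici x) x) (hf' : 0 < f') : ∀ᶠ z in 𝓝[>] x, f x < f z := by
  have hslope : ∀ᶠ z in 𝓝[>] x, 0 < slope f x z :=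
    (hasDerivWithinAt_iff_tendsto_slope' (lt_irrefl x)).1 hf.Ioi_of_Ici
      |>.eventually (eventually_gt_nhds hf')
  filter_upwards [hslope, self_mem_nhdsWithin] with z hz hxz
  exact (slope_pos_iff hxz).1 hz

theorem exists_mem_Ioo_eq_of_hasDerivWithinAt_pos {f : ℝ → ℝ} {f' x y : ℝ} (hxy : x < y)
    (hf : ContinuousOn f (Icc x y)) (hd : HasDerivWithinAt f f' (Ici x) x) (hf' : 0 < f')
    (hy : f y < f x) : ∃ c ∈ Ioo x y, f c = f x := by
  obtain ⟨z, hfz, hz⟩ := ((hd.eventually_lt_of_pos hf').and (Ioo_mem_nhdsGT hxy)).exists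
  obtain ⟨c, hc, hfc⟩ := intermediate_value_Ioo' hz.2.le (hf.mono (Icc_subset_Icc_left hz.1.le))
    ⟨hy, hfz⟩
  exact ⟨c, ⟨hz.1.trans hc.1, hc.2⟩, hfc⟩

def IsPosEquilibrium (a b : ℝ) (H G : ℝ → ℝ) (p : ℝ × ℝ) : Prop :=
  0 < p.1 ∧ 0 < p.2 ∧ a * p.1 = H p.2 ∧ b * p.2 = G p.1

namespace IsPosEquilibrium

variable {a b : ℝ} {H G : ℝ → ℝ} {p q : ℝ × ℝ}

/-- Along the solution set `U` increases with `V`; then the two ratio conditions give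
`V₂ / U₂ < V₁ / U₁` and `U₂ / V₂ ≤ U₁ / V₁`, whose product is `1 < 1`. -/
theorem not_snd_lt (ha : 0 < a) (hb : 0 < b) (hHmono : StrictMonoOn H (Ioi 0))
    (hHdec : AntitoneOn (fun z => H z / z) (Ioi 0))
    (hGdec : StrictAntiOn (fun z => G z / z) (Ioi 0))
    (hp : IsPosEquilibrium a b H G p) (hq : IsPosEquilibrium a b H G q) : ¬ p.2 < q.2 := by
  obtain ⟨hU₁, hV₁, e₁, f₁⟩ := hp
  obtain ⟨hU₂, hV₂, e₂, f₂⟩ := hq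
  intro hV
  have hU : p.1 < q.1 := by
    have h := hHmono hV₁ hV₂ hV
    rw [← e₁, ← e₂] at h
    exact lt_of_mul_lt_mul_left h ha.le
  have hG : q.2 / q.1 < p.2 / p.1 := by
    have h := hGdec hU₁ hU₂ hU
    simp only [← f₁, ← f₂, mul_div_assoc] at h
    exact lt_of_mul_lt_mul_left h hb.le
  have hH : q.1 / q.2 ≤ p.1 / p.2 := by
    have h := hHdec hV₁ hV₂ hV.le
    simp only [← e₁, ← e₂, mul_div_assoc] at h
    exact le_of_mul_le_mul_left h ha
  rw [div_lt_div_iff₀ hU₂ hU₁] at hG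
  rw [div_le_div_iff₀ hV₂ hV₁] at hH
  nlinarith

theorem eq (ha : 0 < a) (hb : 0 < b) (hHmono : StrictMonoOn H (Ioi 0))
    (hHdec : AntitoneOn (fun z => H z / z) (Ioi 0))
    (hGdec : StrictAntiOn (fun z => G z / z) (Ioi 0))
    (hp : IsPosEquilibrium a b H G p) (hq : IsPosEquilibrium a b H G q) : p = q := by
  have hV : p.2 = q.2 := le_antisymm
    (not_lt.1 (hq.not_snd_lt ha hb hHmono hHdec hGdec hp))
    (not_lt.1 (hp.not_snd_lt ha hb hHmono hHdec hGdec hq))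
  have hU : a * p.1 = a * q.1 := by rw [hp.2.2.1, hq.2.2.1, hV]
  exact Prod.ext (mul_left_cancel₀ ha.ne' hU) hV

end IsPosEquilibrium

/-- `F z = G (H z / a) - b z` vanishes at `0`, grows there since `F'(0) = H'(0) G'(0) / a - b > 0`
is equivalent to `R₀ > 1`, and is negative at `ẑ`; a zero `V ∈ (0, ẑ)` of `F` gives the
equilibrium `(H V / a, V)`. -/
theorem exists_isPosEquilibrium {a b : ℝ} (ha : 0 < a) (hb : 0 < b) {H G H' G' : ℝ → ℝ}
    (hH : ∀ z ∈ Ici (0:ℝ), HasDerivWithinAt H (H' z) (Ici 0) z)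
    (hG : ∀ z ∈ Ici (0:ℝ), HasDerivWithinAt G (G' z) (Ici 0) z)
    (hH0 : H 0 = 0) (hG0 : G 0 = 0) (hHmono : StrictMonoOn H (Ici 0))
    (hhat : ∃ zh > 0, G (H zh / a) < b * zh) (hR0 : 1 < H' 0 * G' 0 / (a * b)) :
    ∃ p, IsPosEquilibrium a b H G p := by
  obtain ⟨zh, hzh, hFzh⟩ := hhat
  have hHnonneg : ∀ z ∈ Ici (0:ℝ), 0 ≤ H z / a := fun z hz =>
    div_nonneg (hH0 ▸ hHmono.monotoneOn self_mem_Ici hz hz) ha.le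
  have hHc : ContinuousOn H (Ici 0) := fun z hz => (hH z hz).continuousWithinAt
  have hGc : ContinuousOn G (Ici 0) := fun z hz => (hG z hz).continuousWithinAt
  set F : ℝ → ℝ := fun z => G (H z / a) - b * z
  have hFc : ContinuousOn F (Icc 0 zh) :=
    ((hGc.comp (hHc.div_const a) hHnonneg).sub (continuousOn_const.mul continuousOn_id)).mono
      Icc_subset_Ici_self
  have hFd : HasDerivWithinAt F (G' 0 * (H' 0 / a) - b) (Ici 0) 0 := by
    have hG0' : HasDerivWithinAt G (G' 0) (Ici 0) (H 0 / a) := by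
      simpa only [hH0, zero_div] using hG 0 self_mem_Ici
    exact (hG0'.comp 0 ((hH 0 self_mem_Ici).div_const a) hHnonneg).sub
      ((hasDerivWithinAt_id 0 _).const_mul b |>.congr_deriv (mul_one b))
  have hFd_pos : 0 < G' 0 * (H' 0 / a) - b := by
    rw [one_lt_div (mul_pos ha hb)] at hR0
    rw [sub_pos, mul_div_assoc', lt_div_iff₀ ha]
    linarith
  have hF0 : F 0 = 0 := by simp [F, hH0, hG0]
  obtain ⟨V, hV, hFV⟩ :=
    exists_mem_Ioo_eq_of_hasDerivWithinAt_pos hzh hFc hFd hFd_pos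
      (by rw [hF0]; exact sub_neg.2 hFzh)
  have hHV : 0 < H V := hH0 ▸ hHmono self_mem_Ici (le_of_lt hV.1) hV.1
  refine ⟨(H V / a, V), div_pos hHV ha, hV.1, mul_div_cancel₀ _ ha.ne', ?_⟩
  simp only [F, hF0, sub_eq_zero] at hFV
  exact hFV.symm

theorem stmt_4_general (a b : ℝ) (ha : 0 < a) (hb : 0 < b)
    (H G H' G' : ℝ → ℝ)
    (hH : ∀ z ∈ Ici (0:ℝ), HasDerivWithinAt H (H' z) (Ici 0) z)
    (hG : ∀ z ∈ Ici (0:ℝ), HasDerivWithinAt G (G' z) (Ici 0) z)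
    (hH0 : H 0 = 0) (hG0 : G 0 = 0)
    (hH'pos : ∀ z ∈ Ici (0:ℝ), 0 < H' z)
    (hHdec : AntitoneOn (fun z => H z / z) (Ioi 0))
    (hGdec : StrictAntiOn (fun z => G z / z) (Ioi 0))
    (hhat : ∃ zh > 0, G (H zh / a) < b * zh)
    (hR0 : 1 < H' 0 * G' 0 / (a * b)) :
    ∃! p : ℝ × ℝ, 0 < p.1 ∧ 0 < p.2 ∧ a * p.1 = H p.2 ∧ b * p.2 = G p.1 := by
  have hHmono : StrictMonoOn H (Ici 0) :=
    (convex_Ici 0).strictMonoOn_of_hasDerivWithinAt_pos hH hH'pos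
  obtain ⟨p, hp⟩ := exists_isPosEquilibrium ha hb hH hG hH0 hG0 hHmono hhat hR0
  exact ⟨p, hp, fun q hq =>
    IsPosEquilibrium.eq ha hb (hHmono.mono Ioi_subset_Ici_self) hHdec hGdec hq hp⟩

theorem stmt_4 (a b : ℝ) (ha : 0 < a) (hb : 0 < b)
    (H G H' G' : ℝ → ℝ)
    (hH : ∀ z ∈ Ici (0:ℝ), HasDerivWithinAt H (H' z) (Ici 0) z)
    (hG : ∀ z ∈ Ici (0:ℝ), HasDerivWithinAt G (G' z) (Ici 0) z)
    (hH'c : ContinuousOn H' (Ici 0)) (hG'c : ContinuousOn G' (Ici 0))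
    (hH0 : H 0 = 0) (hG0 : G 0 = 0)
    (hH'pos : ∀ z ∈ Ici (0:ℝ), 0 < H' z) (hG'pos : ∀ z ∈ Ici (0:ℝ), 0 < G' z)
    (hHdec : AntitoneOn (fun z => H z / z) (Ioi 0))
    (hGdec : StrictAntiOn (fun z => G z / z) (Ioi 0))
    (hhat : ∃ zh > 0, G (H zh / a) < b * zh)
    (hR0 : 1 < H' 0 * G' 0 / (a * b)) :
    ∃! p : ℝ × ℝ, 0 < p.1 ∧ 0 < p.2 ∧ a * p.1 = H p.2 ∧ b * p.2 = G p.1 :=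
  stmt_4_general a b ha hb H G H' G' hH hG hH0 hG0 hH'pos hHdec hGdec hhat hR0
end

section
/- Let a, b > 0 and H, G satisfy (H1). Suppose u₀, v₀, u₁, v₁ > 0 satisfy a u₀ - H(v₀) ≥ 0, b v₀ - G(u₀) ≥ 0, and a u₁ = H(v₁), b v₁ = G(u₁) (so (u₁,v₁) is the unique positive equilibrium). If u₀ < u₁ and v₀ < v₁, then a contradiction follows; i.e., no positive pair (u₀, v₀) with u₀ < U, v₀ < V can satisfy both a u₀ ≥ H(v₀) and b v₀ ≥ G(u₀). -/
/-!
Since `H z / z` is nonincreasing, `a u₀ ≥ H v₀` and `a u₁ = H v₁` with `v₀ < v₁` give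
`u₁ / v₁ ≤ u₀ / v₀`; since `G z / z` is strictly decreasing, `b v₀ ≥ G u₀` and `b v₁ = G u₁`
with `u₀ < u₁` give `v₁ / u₁ < v₀ / u₀`. The two ratio inequalities are incompatible.
-/

open Set

lemma mul_le_mul_of_antitoneOn_div {f : ℝ → ℝ} (hf : AntitoneOn (fun z => f z / z) (Ioi 0))
    {c x₀ x₁ y₀ y₁ : ℝ} (hc : 0 < c) (hy₀ : 0 < y₀) (hy : y₀ ≤ y₁)
    (h₀ : f y₀ ≤ c * x₀) (h₁ : c * x₁ ≤ f y₁) :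
    x₁ * y₀ ≤ x₀ * y₁ := by
  have hy₁ : 0 < y₁ := hy₀.trans_le hy
  have hratio : f y₁ * y₀ ≤ f y₀ * y₁ :=
    (div_le_div_iff₀ hy₁ hy₀).1 (hf (mem_Ioi.2 hy₀) (mem_Ioi.2 hy₁) hy)
  refine le_of_mul_le_mul_left ?_ hc
  calc c * (x₁ * y₀) = c * x₁ * y₀ := by ring
    _ ≤ f y₁ * y₀ := by gcongr
    _ ≤ f y₀ * y₁ := hratio
    _ ≤ c * x₀ * y₁ := by gcongr
    _ = c * (x₀ * y₁) := by ring

lemma mul_lt_mul_of_strictAntiOn_div {f : ℝ → ℝ} (hf : StrictAntiOn (fun z => f z / z) (Ioi 0))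
    {c x₀ x₁ y₀ y₁ : ℝ} (hc : 0 < c) (hy₀ : 0 < y₀) (hy : y₀ < y₁)
    (h₀ : f y₀ ≤ c * x₀) (h₁ : c * x₁ ≤ f y₁) :
    x₁ * y₀ < x₀ * y₁ := by
  have hy₁ : 0 < y₁ := hy₀.trans hy
  have hratio : f y₁ * y₀ < f y₀ * y₁ :=
    (div_lt_div_iff₀ hy₁ hy₀).1 (hf (mem_Ioi.2 hy₀) (mem_Ioi.2 hy₁) hy)
  refine lt_of_mul_lt_mul_left ?_ hc.le
  calc c * (x₁ * y₀) = c * x₁ * y₀ := by ring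
    _ ≤ f y₁ * y₀ := by gcongr
    _ < f y₀ * y₁ := hratio
    _ ≤ c * x₀ * y₁ := by gcongr
    _ = c * (x₀ * y₁) := by ring

theorem stmt_5_general (a b : ℝ) (ha : 0 < a) (hb : 0 < b)
    (H G : ℝ → ℝ)
    (hHdec : AntitoneOn (fun z => H z / z) (Ioi 0))
    (hGdec : StrictAntiOn (fun z => G z / z) (Ioi 0))
    (u₀ v₀ u₁ v₁ : ℝ)
    (hu₀ : 0 < u₀) (hv₀ : 0 < v₀)
    (hineq1 : 0 ≤ a * u₀ - H v₀) (hineq2 : 0 ≤ b * v₀ - G u₀)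
    (heq1 : a * u₁ = H v₁) (heq2 : b * v₁ = G u₁)
    (hu : u₀ < u₁) (hv : v₀ < v₁) :
    False := by
  have huv : u₁ * v₀ ≤ u₀ * v₁ :=
    mul_le_mul_of_antitoneOn_div hHdec ha hv₀ hv.le (sub_nonneg.1 hineq1) heq1.le
  have hvu : v₁ * u₀ < v₀ * u₁ :=
    mul_lt_mul_of_strictAntiOn_div hGdec hb hu₀ hu (sub_nonneg.1 hineq2) heq2.le
  linarith

theorem stmt_5 (a b : ℝ) (ha : 0 < a) (hb : 0 < b)
    (H G H' G' : ℝ → ℝ)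
    (hH : ∀ z ∈ Ici (0:ℝ), HasDerivWithinAt H (H' z) (Ici 0) z)
    (hG : ∀ z ∈ Ici (0:ℝ), HasDerivWithinAt G (G' z) (Ici 0) z)
    (hH'c : ContinuousOn H' (Ici 0)) (hG'c : ContinuousOn G' (Ici 0))
    (hH0 : H 0 = 0) (hG0 : G 0 = 0)
    (hH'pos : ∀ z ∈ Ici (0:ℝ), 0 < H' z) (hG'pos : ∀ z ∈ Ici (0:ℝ), 0 < G' z)
    (hHdec : AntitoneOn (fun z => H z / z) (Ioi 0))
    (hGdec : StrictAntiOn (fun z => G z / z) (Ioi 0))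
    (hhat : ∃ zh > 0, G (H zh / a) < b * zh)
    (u₀ v₀ u₁ v₁ : ℝ)
    (hu₀ : 0 < u₀) (hv₀ : 0 < v₀) (hu₁ : 0 < u₁) (hv₁ : 0 < v₁)
    (hineq1 : 0 ≤ a * u₀ - H v₀) (hineq2 : 0 ≤ b * v₀ - G u₀)
    (heq1 : a * u₁ = H v₁) (heq2 : b * v₁ = G u₁)
    (hu : u₀ < u₁) (hv : v₀ < v₁) :
    False :=
  stmt_5_general a b ha hb H G hHdec hGdec u₀ v₀ u₁ v₁ hu₀ hv₀ hineq1 hineq2 heq1 heq2 hu hv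
end

section
/- Suppose λ₁ and λ₂ respectively denote the principal eigenvalues of the eigenvalue problems (2.18) and (2.19) associated with parameters H'(0), G'(0) > 0. Then: if λ₁ ≥ 0, λ₁/max{H'(0),G'(0)} ≤ λ₂ ≤ λ₁/min{H'(0),G'(0)}; if λ₁ < 0, λ₁/min{H'(0),G'(0)} ≤ λ₂ ≤ λ₁/max{H'(0),G'(0)}. In particular λ₁ and λ₂ have the same sign. (It suffices to prove the abstract comparison: if L[φ] = λ₁ φ with φ ∈ X^{++} and M[φ] is obtained from L by dividing the first row by H'(0) and the second by G'(0), then the principal eigenvalue λ₂ of M satisfies the above bounds.) -/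
/-!
The eigenfunction `φ` of `L` is still a positive test function for `M`: dividing the rows
turns `L φ = λ₁ φ` into `M φ = (λ₁ / H'(0) · φ₁, λ₁ / G'(0) · φ₂)`. Comparing `M φ` with
`μ φ` for `μ` the larger, resp. smaller, of the two ratios, Lemma 2.1 traps `λ₂` between
`λ₁ / H'(0)` and `λ₁ / G'(0)`, which gives both the bounds and the sign.
-/

open Set

lemma div_le_div_of_nonpos_left {a b c : ℝ} (hc : c ≤ 0) (ha : 0 < a) (hab : a ≤ b) :
    c / a ≤ c / b := by
  have h := div_le_div_of_nonneg_left (neg_nonneg.2 hc) ha hab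
  rwa [neg_div, neg_div, neg_le_neg_iff] at h

lemma uIcc_div_subset_Icc_of_nonneg {a b c : ℝ} (hc : 0 ≤ c) (ha : 0 < a) (hb : 0 < b) :
    uIcc (c / a) (c / b) ⊆ Icc (c / max a b) (c / min a b) :=
  uIcc_subset_Icc
    ⟨div_le_div_of_nonneg_left hc ha (le_max_left a b),
      div_le_div_of_nonneg_left hc (lt_min ha hb) (min_le_left a b)⟩
    ⟨div_le_div_of_nonneg_left hc hb (le_max_right a b),
      div_le_div_of_nonneg_left hc (lt_min ha hb) (min_le_right a b)⟩

lemma uIcc_div_subset_Icc_of_nonpos {a b c : ℝ} (hc : c ≤ 0) (ha : 0 < a) (hb : 0 < b) :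
    uIcc (c / a) (c / b) ⊆ Icc (c / min a b) (c / max a b) :=
  uIcc_subset_Icc
    ⟨div_le_div_of_nonpos_left hc (lt_min ha hb) (min_le_left a b),
      div_le_div_of_nonpos_left hc ha (le_max_left a b)⟩
    ⟨div_le_div_of_nonpos_left hc (lt_min ha hb) (min_le_right a b),
      div_le_div_of_nonpos_left hc hb (le_max_right a b)⟩

lemma sign_eq_of_mem_uIcc_div {a b c x : ℝ} (ha : 0 < a) (hb : 0 < b)
    (hx : x ∈ uIcc (c / a) (c / b)) : SignType.sign x = SignType.sign c := by
  rcases lt_trichotomy c 0 with hc | rfl | hc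
  · have hx' := (uIcc_div_subset_Icc_of_nonpos hc.le ha hb hx).2
    rw [sign_neg hc, sign_neg (hx'.trans_lt (div_neg_of_neg_of_pos hc (lt_max_of_lt_left ha)))]
  · rw [zero_div, zero_div, uIcc_self, mem_singleton_iff] at hx
    rw [hx]
  · have hx' := (uIcc_div_subset_Icc_of_nonneg hc.le ha hb hx).1
    rw [sign_pos hc, sign_pos ((div_pos hc (lt_max_of_lt_left ha)).trans_le hx')]

lemma mem_uIcc_of_sub_super {s : Set ℝ} {φ₁ φ₂ m₁ m₂ : ℝ → ℝ} {μ₁ μ₂ lam : ℝ}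
    (hφ : ∀ x ∈ s, 0 ≤ φ₁ x ∧ 0 ≤ φ₂ x)
    (hm : ∀ x ∈ s, m₁ x = μ₁ * φ₁ x ∧ m₂ x = μ₂ * φ₂ x)
    (hsub : ∀ μ : ℝ, (∀ x ∈ s, m₁ x ≤ μ * φ₁ x ∧ m₂ x ≤ μ * φ₂ x) → lam ≤ μ)
    (hsup : ∀ μ : ℝ, (∀ x ∈ s, μ * φ₁ x ≤ m₁ x ∧ μ * φ₂ x ≤ m₂ x) → μ ≤ lam) :
    lam ∈ uIcc μ₁ μ₂ := by
  refine ⟨hsup _ fun x hx => ?_, hsub _ fun x hx => ?_⟩ <;> rw [(hm x hx).1, (hm x hx).2]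
  · exact ⟨mul_le_mul_of_nonneg_right inf_le_left (hφ x hx).1,
      mul_le_mul_of_nonneg_right inf_le_right (hφ x hx).2⟩
  · exact ⟨mul_le_mul_of_nonneg_right le_sup_left (hφ x hx).1,
      mul_le_mul_of_nonneg_right le_sup_right (hφ x hx).2⟩

lemma inv_mul_sub_mul_add_eq {H lam a b : ℝ} (hH : H ≠ 0) :
    1 / H * (lam * a - H * b) + b = lam / H * a := by
  field_simp
  ring

theorem stmt_6_general (l H0 G0 lam1 lam2 : ℝ) (hH0 : 0 < H0) (hG0 : 0 < G0)
    (L1 L2 M1 M2 : (ℝ → ℝ) → (ℝ → ℝ) → ℝ → ℝ)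
    (hM1 : ∀ f g x, M1 f g x = (1 / H0) * (L1 f g x - H0 * g x) + g x)
    (hM2 : ∀ f g x, M2 f g x = (1 / G0) * (L2 f g x - G0 * f x) + f x)
    (φ₁ φ₂ : ℝ → ℝ)
    (hφpos : ∀ x ∈ Icc 0 l, 0 < φ₁ x ∧ 0 < φ₂ x)
    (heig : ∀ x ∈ Icc 0 l, L1 φ₁ φ₂ x = lam1 * φ₁ x ∧ L2 φ₁ φ₂ x = lam1 * φ₂ x)
    (hsub : ∀ (lam : ℝ) (f g : ℝ → ℝ), (∀ x ∈ Icc 0 l, 0 < f x ∧ 0 < g x) →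
      (∀ x ∈ Icc 0 l, M1 f g x ≤ lam * f x ∧ M2 f g x ≤ lam * g x) → lam2 ≤ lam)
    (hsup : ∀ (lam : ℝ) (f g : ℝ → ℝ), (∀ x ∈ Icc 0 l, 0 < f x ∧ 0 < g x) →
      (∀ x ∈ Icc 0 l, lam * f x ≤ M1 f g x ∧ lam * g x ≤ M2 f g x) → lam ≤ lam2) :
    (0 ≤ lam1 → lam1 / max H0 G0 ≤ lam2 ∧ lam2 ≤ lam1 / min H0 G0) ∧
    (lam1 < 0 → lam1 / min H0 G0 ≤ lam2 ∧ lam2 ≤ lam1 / max H0 G0) ∧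
    (0 < lam1 ↔ 0 < lam2) ∧ (lam1 = 0 ↔ lam2 = 0) ∧ (lam1 < 0 ↔ lam2 < 0) := by
  have hMφ : ∀ x ∈ Icc 0 l,
      M1 φ₁ φ₂ x = lam1 / H0 * φ₁ x ∧ M2 φ₁ φ₂ x = lam1 / G0 * φ₂ x := fun x hx =>
    ⟨by rw [hM1, (heig x hx).1, inv_mul_sub_mul_add_eq hH0.ne'],
      by rw [hM2, (heig x hx).2, inv_mul_sub_mul_add_eq hG0.ne']⟩
  have hmem : lam2 ∈ uIcc (lam1 / H0) (lam1 / G0) :=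
    mem_uIcc_of_sub_super (fun x hx => ⟨(hφpos x hx).1.le, (hφpos x hx).2.le⟩) hMφ
      (fun μ => hsub μ φ₁ φ₂ hφpos) (fun μ => hsup μ φ₁ φ₂ hφpos)
  have hsign := sign_eq_of_mem_uIcc_div hH0 hG0 hmem
  refine ⟨fun h => uIcc_div_subset_Icc_of_nonneg h hH0 hG0 hmem,
    fun h => uIcc_div_subset_Icc_of_nonpos h.le hH0 hG0 hmem, ?_, ?_, ?_⟩
  · rw [← sign_eq_one_iff, ← hsign, sign_eq_one_iff]
  · rw [← sign_eq_zero_iff, ← hsign, sign_eq_zero_iff]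
  · rw [← sign_eq_neg_one_iff, ← hsign, sign_eq_neg_one_iff]

/-- Abstract comparison of the principal eigenvalues of problems (2.18) (operator `L`)
and (2.19) (operator `M`, obtained by dividing the two rows of `L` by `H'(0)` and
`G'(0)` respectively), assuming the sub/supersolution characterization of the
principal eigenvalue `lam2` of `M` (Lemma 2.1). -/
theorem stmt_6 (l H0 G0 lam1 lam2 : ℝ) (hl : 0 < l) (hH0 : 0 < H0) (hG0 : 0 < G0)
    (L1 L2 M1 M2 : (ℝ → ℝ) → (ℝ → ℝ) → ℝ → ℝ)
    (hM1 : ∀ f g x, M1 f g x = (1 / H0) * (L1 f g x - H0 * g x) + g x)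
    (hM2 : ∀ f g x, M2 f g x = (1 / G0) * (L2 f g x - G0 * f x) + f x)
    (φ₁ φ₂ : ℝ → ℝ)
    (hφpos : ∀ x ∈ Icc 0 l, 0 < φ₁ x ∧ 0 < φ₂ x)
    (heig : ∀ x ∈ Icc 0 l, L1 φ₁ φ₂ x = lam1 * φ₁ x ∧ L2 φ₁ φ₂ x = lam1 * φ₂ x)
    (hsub : ∀ (lam : ℝ) (f g : ℝ → ℝ), (∀ x ∈ Icc 0 l, 0 < f x ∧ 0 < g x) →
      (∀ x ∈ Icc 0 l, M1 f g x ≤ lam * f x ∧ M2 f g x ≤ lam * g x) → lam2 ≤ lam)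
    (hsup : ∀ (lam : ℝ) (f g : ℝ → ℝ), (∀ x ∈ Icc 0 l, 0 < f x ∧ 0 < g x) →
      (∀ x ∈ Icc 0 l, lam * f x ≤ M1 f g x ∧ lam * g x ≤ M2 f g x) → lam ≤ lam2) :
    (0 ≤ lam1 → lam1 / max H0 G0 ≤ lam2 ∧ lam2 ≤ lam1 / min H0 G0) ∧
    (lam1 < 0 → lam1 / min H0 G0 ≤ lam2 ∧ lam2 ≤ lam1 / max H0 G0) ∧
    (0 < lam1 ↔ 0 < lam2) ∧ (lam1 = 0 ↔ lam2 = 0) ∧ (lam1 < 0 ↔ lam2 < 0) :=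
  stmt_6_general l H0 G0 lam1 lam2 hH0 hG0 L1 L2 M1 M2 hM1 hM2 φ₁ φ₂ hφpos heig hsub hsup
end

section
/- Fix a, b, d₂ > 0, H'(0), G'(0) > 0 and κ₁ ∈ (-1/2, 0). Define ν₁(d₂) = ( -(a + b - d₂κ₁) + √((a + b - d₂κ₁)² - 4[a(b - d₂κ₁) - H'(0)G'(0)]) )/2. Then ν₁ is strictly decreasing in d₂ on (0,∞) and ν₁(d₂) → -a as d₂ → ∞. Consequently, if ν₁(Λ) > 0 for some Λ > 0, there exists a unique d̲₂ > Λ with ν₁(d̲₂) = 0 and ν₁(d₂)(d₂ - d̲₂) < 0 for all d₂ > Λ with d₂ ≠ d̲₂. -/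
/-!
Writing `c = H'(0)G'(0)` and `w = a - b + d₂κ₁`, one has `ν₁(d₂) = -a + r(w)`, where `r(w)` is the
positive root of `X² - wX - c`. From `r (r - w) = c` the root `r` is a strictly increasing function of
`w` (the inverse of `r ↦ r - c / r`) and `r = c / (r - w) → 0` as `w → -∞`. Since `κ₁ < 0`, `w`
decreases to `-∞` as `d₂ → ∞`, so `ν₁` is continuous, strictly decreasing and tends to `-a`; the
zero `d̲₂` then comes from the intermediate value theorem.
-/

open Set Filter Topology

namespace QuadraticPosRoot

/-- The positive root of `X ^ 2 - w * X - c` (for `0 < c`). -/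
noncomputable def posRoot (c w : ℝ) : ℝ := (w + √(w ^ 2 + 4 * c)) / 2

variable {c : ℝ}

theorem posRoot_mul_sub (hc : 0 ≤ c) (w : ℝ) : posRoot c w * (posRoot c w - w) = c := by
  have hsq : √(w ^ 2 + 4 * c) ^ 2 = w ^ 2 + 4 * c := Real.sq_sqrt (by positivity)
  unfold posRoot
  linear_combination hsq / 4

theorem posRoot_pos (hc : 0 < c) (w : ℝ) : 0 < posRoot c w := by
  have : -w < √(w ^ 2 + 4 * c) := Real.lt_sqrt_of_sq_lt (by rw [neg_sq]; linarith)
  unfold posRoot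
  linarith

theorem lt_posRoot (hc : 0 < c) (w : ℝ) : w < posRoot c w := by
  have : w < √(w ^ 2 + 4 * c) := Real.lt_sqrt_of_sq_lt (by linarith)
  unfold posRoot
  linarith

theorem posRoot_sub_eq_div (hc : 0 < c) (w : ℝ) : posRoot c w - w = c / posRoot c w := by
  rw [eq_div_iff (posRoot_pos hc w).ne', mul_comm, posRoot_mul_sub hc.le]

theorem strictMono_posRoot (hc : 0 < c) : StrictMono (posRoot c) := by
  intro u v huv
  by_contra! hle
  have hdiv : c / posRoot c u ≤ c / posRoot c v :=
    div_le_div_of_nonneg_left hc.le (posRoot_pos hc v) hle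
  linarith [posRoot_sub_eq_div hc u, posRoot_sub_eq_div hc v]

theorem continuous_posRoot (c : ℝ) : Continuous (posRoot c) := by
  unfold posRoot
  fun_prop

theorem tendsto_posRoot_atBot (hc : 0 < c) : Tendsto (posRoot c) atBot (𝓝 0) := by
  have hgap : Tendsto (fun w => posRoot c w - w) atBot atTop :=
    tendsto_atTop_mono (fun w => by linarith [posRoot_pos hc w]) tendsto_neg_atBot_atTop
  have hlim : Tendsto (fun w => c / (posRoot c w - w)) atBot (𝓝 0) :=
    tendsto_const_nhds.div_atTop hgap
  refine hlim.congr fun w => ?_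
  rw [div_eq_iff (sub_pos.2 (lt_posRoot hc w)).ne', posRoot_mul_sub hc.le]

end QuadraticPosRoot

theorem exists_zero_gt_of_tendsto_neg {f : ℝ → ℝ} {L Λ : ℝ} (hf : Continuous f)
    (hL : Tendsto f atTop (𝓝 L)) (hL0 : L < 0) (hΛ : 0 < f Λ) : ∃ x > Λ, f x = 0 := by
  obtain ⟨M, hfM, hΛM⟩ :=
    ((hL.eventually_lt_const hL0).and (eventually_ge_atTop Λ)).exists
  obtain ⟨x, hx, hfx⟩ := intermediate_value_Ioo' hΛM hf.continuousOn ⟨hfM, hΛ⟩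
  exact ⟨x, hx.1, hfx⟩

theorem StrictAnti.mul_sub_neg_of_eq_zero {f : ℝ → ℝ} (hf : StrictAnti f) {x₀ x : ℝ}
    (hx₀ : f x₀ = 0) (hx : x ≠ x₀) : f x * (x - x₀) < 0 := by
  rcases hx.lt_or_gt with h | h
  · exact mul_neg_of_pos_of_neg (hx₀ ▸ hf h) (sub_neg.2 h)
  · exact mul_neg_of_neg_of_pos (hx₀ ▸ hf h) (sub_pos.2 h)

open QuadraticPosRoot in
theorem stmt_11_general (a b H0 G0 κ₁ : ℝ) (ha : 0 < a)
    (hH0 : 0 < H0) (hG0 : 0 < G0) (hκ : κ₁ ∈ Ioo (-(1/2) : ℝ) 0)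
    (ν₁ : ℝ → ℝ)
    (hν : ∀ d2, ν₁ d2 = (-(a + b - d2 * κ₁)
      + Real.sqrt ((a + b - d2 * κ₁) ^ 2 - 4 * (a * (b - d2 * κ₁) - H0 * G0))) / 2) :
    StrictAntiOn ν₁ (Ioi 0) ∧ Tendsto ν₁ atTop (nhds (-a)) ∧
    ∀ Λ > 0, 0 < ν₁ Λ →
      ∃ dd > Λ, ν₁ dd = 0 ∧ (∀ d > Λ, ν₁ d = 0 → d = dd) ∧
        ∀ d > Λ, d ≠ dd → ν₁ d * (d - dd) < 0 := by
  have hc : 0 < H0 * G0 := mul_pos hH0 hG0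
  set w : ℝ → ℝ := fun d => a - b + d * κ₁
  have hν_eq : ν₁ = fun d => -a + posRoot (H0 * G0) (w d) := by
    funext d
    have hdisc : (a + b - d * κ₁) ^ 2 - 4 * (a * (b - d * κ₁) - H0 * G0)
        = w d ^ 2 + 4 * (H0 * G0) := by ring
    rw [hν, hdisc, posRoot]
    ring
  have hw_anti : StrictAnti w := fun x y hxy => by simp only [w]; nlinarith [hκ.2]
  have hw_lim : Tendsto w atTop atBot :=
    tendsto_atBot_add_const_left _ _ (tendsto_id.atTop_mul_const_of_neg hκ.2)
  have hanti : StrictAnti ν₁ := by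
    rw [hν_eq]
    exact fun x y hxy => by simpa using strictMono_posRoot hc (hw_anti hxy)
  have hlim : Tendsto ν₁ atTop (𝓝 (-a)) := by
    rw [hν_eq]
    have := (tendsto_const_nhds (x := -a)).add ((tendsto_posRoot_atBot hc).comp hw_lim)
    rwa [add_zero] at this
  have hcont : Continuous ν₁ := by
    rw [hν_eq]
    exact continuous_const.add ((continuous_posRoot _).comp (by fun_prop))
  refine ⟨hanti.strictAntiOn _, hlim, fun Λ _ hΛ => ?_⟩
  obtain ⟨dd, hdd, hzero⟩ := exists_zero_gt_of_tendsto_neg hcont hlim (by linarith) hΛ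
  exact ⟨dd, hdd, hzero, fun d _ hd => hanti.injective (hd.trans hzero.symm),
    fun d _ hne => hanti.mul_sub_neg_of_eq_zero hzero hne⟩

theorem stmt_11 (a b H0 G0 κ₁ : ℝ) (ha : 0 < a) (hb : 0 < b)
    (hH0 : 0 < H0) (hG0 : 0 < G0) (hκ : κ₁ ∈ Ioo (-(1/2) : ℝ) 0)
    (ν₁ : ℝ → ℝ)
    (hν : ∀ d2, ν₁ d2 = (-(a + b - d2 * κ₁)
      + Real.sqrt ((a + b - d2 * κ₁) ^ 2 - 4 * (a * (b - d2 * κ₁) - H0 * G0))) / 2) :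
    StrictAntiOn ν₁ (Ioi 0) ∧ Tendsto ν₁ atTop (nhds (-a)) ∧
    ∀ Λ > 0, 0 < ν₁ Λ →
      ∃ dd > Λ, ν₁ dd = 0 ∧ (∀ d > Λ, ν₁ d = 0 → d = dd) ∧
        ∀ d > Λ, d ≠ dd → ν₁ d * (d - dd) < 0 :=
  stmt_11_general a b H0 G0 κ₁ ha hH0 hG0 hκ ν₁ hν
end

section
/- Let J₁ satisfy (J) and let p : (-∞, 0] → [0,∞) be continuous, nonincreasing, and strictly positive on (-∞, 0) with p(-l₀) > 0 for some l₀ > 0. If ∫_0^∞ x J₁(x) dx = ∞, then ∫_{-∞}^0 ∫_0^∞ J₁(x - y) p(x) dy dx = ∞. Concretely: for any l > l₀, ∫_{-l}^{-l₀} ∫_0^l J₁(x-y) dy dx ≥ ∫_{l₀}^l J₁(y)(y - l₀) dy, which diverges as l → ∞. -/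
/-! Evenness turns `∫_0^l J(x - y) dy` into `∫_{-x}^{l-x} J`, which is at least `∫_{-x}^l J` for
`x ≤ 0`; integrating `∫_s^l J` over `s ∈ [l₀, l]` gives `∫_{l₀}^l J(u)(u - l₀) du` by parts.
For the divergence, bound `p x` below by `p(-l₀)` for `x ≤ -l₀`: by Tonelli what remains is
`∫ J(u)(u - l₀)₊ du`, which differs from the infinite first moment by at most `l₀ ∫ J < ∞`. -/

open MeasureTheory Set ENNReal

theorem intervalIntegral_integral_eq_integral_mul_sub {f : ℝ → ℝ} (hf : Continuous f)
    (a b : ℝ) :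
    ∫ s in a..b, ∫ u in s..b, f u = ∫ u in a..b, f u * (u - a) := by
  have hparts := intervalIntegral.integral_mul_deriv_eq_deriv_mul (a := a) (b := b)
    (u := fun s => s - a) (v := fun s => ∫ u in s..b, f u) (u' := fun _ => 1)
    (v' := fun s => -f s) (fun s _ => (hasDerivAt_id s).sub_const a)
    (fun s _ => intervalIntegral.integral_hasDerivAt_left (hf.intervalIntegrable s b)
      (hf.stronglyMeasurableAtFilter _ _) hf.continuousAt)
    intervalIntegrable_const (hf.neg.intervalIntegrable a b)
  simp only [mul_neg, intervalIntegral.integral_neg, intervalIntegral.integral_same, mul_zero,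
    sub_self, zero_mul, one_mul, zero_sub, neg_inj] at hparts
  simp_rw [← hparts, mul_comm]

theorem intervalIntegral_comp_sub_of_even {E : Type*} [NormedAddCommGroup E] [NormedSpace ℝ E]
    {f : ℝ → E} (hf : ∀ x, f (-x) = f x) (x a b : ℝ) :
    ∫ y in a..b, f (x - y) = ∫ u in a - x..b - x, f u := by
  simp_rw [← neg_sub _ x, hf]
  exact intervalIntegral.integral_comp_sub_right f x

theorem setLIntegral_Ioi_comp_sub_of_even {f : ℝ → ℝ≥0∞} (hf : ∀ x, f (-x) = f x)
    (x : ℝ) :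
    ∫⁻ y in Ioi 0, f (x - y) = ∫⁻ u in Ioi (-x), f u := by
  simp_rw [← neg_sub _ x, hf]
  simpa using (measurePreserving_sub_right volume x).setLIntegral_comp_preimage_emb
    (measurableEmbedding_subRight x) f (Ioi (-x))

theorem setLIntegral_Iio_comp_neg (f : ℝ → ℝ≥0∞) (a : ℝ) :
    ∫⁻ x in Iio (-a), f (-x) = ∫⁻ s in Ioi a, f s := by
  simpa using (Measure.measurePreserving_neg (volume : Measure ℝ)).setLIntegral_comp_preimage_emb
    (MeasurableEquiv.neg ℝ).measurableEmbedding f (Ioi a)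

theorem setLIntegral_Ioi_setLIntegral_Ioi_eq_lintegral_mul {f : ℝ → ℝ≥0∞} (hf : Measurable f)
    (a : ℝ) :
    ∫⁻ s in Ioi a, ∫⁻ u in Ioi s, f u = ∫⁻ u, f u * ENNReal.ofReal (u - a) := by
  calc ∫⁻ s in Ioi a, ∫⁻ u in Ioi s, f u
      = ∫⁻ s in Ioi a, ∫⁻ u, (Iio u).indicator (fun _ => f u) s := by
        refine lintegral_congr fun s => ?_
        rw [← lintegral_indicator measurableSet_Ioi]
        rfl
    _ = ∫⁻ u, ∫⁻ s in Ioi a, (Iio u).indicator (fun _ => f u) s :=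
        lintegral_lintegral_swap ((Measurable.ite (measurableSet_lt measurable_fst measurable_snd)
          (hf.comp measurable_snd) measurable_const).aemeasurable)
    _ = ∫⁻ u, f u * ENNReal.ofReal (u - a) := by
        refine lintegral_congr fun u => ?_
        rw [lintegral_indicator_const measurableSet_Iio, Measure.restrict_apply measurableSet_Iio,
          Iio_inter_Ioi, Real.volume_Ioo]

theorem lintegral_ofReal_mul_ofReal_sub_eq_top {f : ℝ → ℝ} (hf : Integrable f) {a : ℝ}
    (ha : 0 ≤ a) (hmom : ∫⁻ x in Ioi 0, ENNReal.ofReal (x * f x) = ⊤) :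
    ∫⁻ x, ENNReal.ofReal (f x) * ENNReal.ofReal (x - a) = ⊤ := by
  have hsplit : ∀ x ∈ Ioi (0 : ℝ), ENNReal.ofReal (x * f x) ≤
      ENNReal.ofReal (f x) * ENNReal.ofReal (x - a) + ENNReal.ofReal a * ENNReal.ofReal (f x) := by
    intro x hx
    rcases le_or_gt (f x) 0 with hfx | hfx
    · simp [ENNReal.ofReal_of_nonpos (mul_nonpos_of_nonneg_of_nonpos (le_of_lt hx) hfx)]
    calc ENNReal.ofReal (x * f x) = ENNReal.ofReal ((x - a) * f x + a * f x) := by ring_nf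
      _ ≤ ENNReal.ofReal ((x - a) * f x) + ENNReal.ofReal (a * f x) := ofReal_add_le
      _ = _ := by rw [ofReal_mul' hfx.le, ofReal_mul ha, mul_comm]
  have hfin : ∫⁻ x, ENNReal.ofReal a * ENNReal.ofReal (f x) ≠ ⊤ := by
    rw [lintegral_const_mul' _ _ ofReal_ne_top]
    exact mul_ne_top ofReal_ne_top hf.lintegral_lt_top.ne
  have htop : ⊤ ≤ (∫⁻ x, ENNReal.ofReal (f x) * ENNReal.ofReal (x - a)) +
      ∫⁻ x, ENNReal.ofReal a * ENNReal.ofReal (f x) :=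
    calc ⊤ = ∫⁻ x in Ioi 0, ENNReal.ofReal (x * f x) := hmom.symm
      _ ≤ ∫⁻ x in Ioi 0, (ENNReal.ofReal (f x) * ENNReal.ofReal (x - a) +
          ENNReal.ofReal a * ENNReal.ofReal (f x)) := setLIntegral_mono' measurableSet_Ioi hsplit
      _ ≤ ∫⁻ x, (ENNReal.ofReal (f x) * ENNReal.ofReal (x - a) +
          ENNReal.ofReal a * ENNReal.ofReal (f x)) := setLIntegral_le_lintegral _ _
      _ = _ := lintegral_add_right' _ (aemeasurable_const.mul hf.aemeasurable.ennreal_ofReal)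
  by_contra h
  exact add_ne_top.mpr ⟨h, hfin⟩ (top_le_iff.mp htop)

section EvenKernel

variable {J : ℝ → ℝ}

theorem intervalIntegral_le_intervalIntegral_comp_sub (hJc : Continuous J) (hJnn : ∀ x, 0 ≤ J x)
    (hJeven : ∀ x, J (-x) = J x) {b x : ℝ} (hx : x ≤ 0) :
    ∫ u in -x..b, J u ≤ ∫ y in 0..b, J (x - y) := by
  rw [intervalIntegral_comp_sub_of_even hJeven, zero_sub,
    ← intervalIntegral.integral_add_adjacent_intervals (hJc.intervalIntegrable (-x) b)
      (hJc.intervalIntegrable b (b - x)), le_add_iff_nonneg_right]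
  exact intervalIntegral.integral_nonneg (by linarith) fun u _ => hJnn u

theorem setIntegral_mul_sub_le_setIntegral_setIntegral (hJc : Continuous J)
    (hJnn : ∀ x, 0 ≤ J x) (hJeven : ∀ x, J (-x) = J x) {a b : ℝ} (ha : 0 ≤ a) (hab : a ≤ b) :
    ∫ y in Icc a b, J y * (y - a) ≤ ∫ x in Icc (-b) (-a), ∫ y in Ioc 0 b, J (x - y) := by
  have hb : 0 ≤ b := ha.trans hab
  simp_rw [← intervalIntegral.integral_of_le hb]
  calc ∫ y in Icc a b, J y * (y - a)
      = ∫ s in a..b, ∫ u in s..b, J u := by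
        rw [intervalIntegral_integral_eq_integral_mul_sub hJc, intervalIntegral.integral_of_le hab,
          integral_Icc_eq_integral_Ioc]
    _ = ∫ x in Icc (-b) (-a), ∫ u in -x..b, J u := by
        rw [integral_Icc_eq_integral_Ioc, ← intervalIntegral.integral_of_le (neg_le_neg hab),
          intervalIntegral.integral_comp_neg (fun s => ∫ u in s..b, J u), neg_neg, neg_neg]
    _ ≤ ∫ x in Icc (-b) (-a), ∫ y in 0..b, J (x - y) := by
        refine integral_mono_of_nonneg ?_ ?_ ?_
        · filter_upwards [ae_restrict_mem measurableSet_Icc] with x hx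
          exact intervalIntegral.integral_nonneg (by linarith [hx.1]) fun u _ => hJnn u
        · exact (intervalIntegral.continuous_parametric_intervalIntegral_of_continuous'
            (by fun_prop) 0 b).integrableOn_Icc
        · filter_upwards [ae_restrict_mem measurableSet_Icc] with x hx
          exact intervalIntegral_le_intervalIntegral_comp_sub hJc hJnn hJeven
            (by linarith [hx.2])

theorem setLIntegral_Iio_setLIntegral_Ioi_eq_top (hJm : Measurable J) (hJi : Integrable J)
    (hJeven : ∀ x, J (-x) = J x) {p : ℝ → ℝ} (hpanti : AntitoneOn p (Iic 0)) {a : ℝ}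
    (ha : 0 ≤ a) (hpa : 0 < p (-a)) (hmom : ∫⁻ x in Ioi 0, ENNReal.ofReal (x * J x) = ⊤) :
    ∫⁻ x in Iio 0, ∫⁻ y in Ioi 0, ENNReal.ofReal (J (x - y) * p x) = ⊤ := by
  have hinner : ∀ x, ∫⁻ y in Ioi 0, ENNReal.ofReal (J (x - y)) =
      ∫⁻ u in Ioi (-x), ENNReal.ofReal (J u) :=
    setLIntegral_Ioi_comp_sub_of_even (f := fun u => ENNReal.ofReal (J u)) (by simp [hJeven])
  refine top_unique ?_
  calc ⊤ = ∫⁻ x in Iio (-a), ∫⁻ y in Ioi 0,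
        ENNReal.ofReal (p (-a)) * ENNReal.ofReal (J (x - y)) := by
        simp_rw [lintegral_const_mul' _ _ ofReal_ne_top, hinner,
          setLIntegral_Iio_comp_neg (fun s => ∫⁻ u in Ioi s, ENNReal.ofReal (J u)),
          setLIntegral_Ioi_setLIntegral_Ioi_eq_lintegral_mul hJm.ennreal_ofReal,
          lintegral_ofReal_mul_ofReal_sub_eq_top hJi ha hmom]
        exact (mul_top (ofReal_pos.2 hpa).ne').symm
    _ ≤ ∫⁻ x in Iio (-a), ∫⁻ y in Ioi 0, ENNReal.ofReal (J (x - y) * p x) := by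
        refine setLIntegral_mono' measurableSet_Iio fun x hx => lintegral_mono fun y => ?_
        have hpx : p (-a) ≤ p x := hpanti (mem_Iic.2 (hx.out.le.trans (neg_nonpos.2 ha)))
          (mem_Iic.2 (neg_nonpos.2 ha)) hx.out.le
        rw [ofReal_mul' (hpa.trans_le hpx).le, mul_comm]
        gcongr
    _ ≤ ∫⁻ x in Iio 0, ∫⁻ y in Ioi 0, ENNReal.ofReal (J (x - y) * p x) :=
        lintegral_mono_set (Iio_subset_Iio (neg_nonpos.2 ha))

end EvenKernel

theorem stmt_13_general (J1 : ℝ → ℝ) (hJc : Continuous J1)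
    (hJnn : ∀ x, 0 ≤ J1 x) (hJeven : ∀ x, J1 (-x) = J1 x) (hJint : ∫ x, J1 x = 1)
    (p : ℝ → ℝ) (hpanti : AntitoneOn p (Iic 0))
    (l₀ : ℝ) (hl₀ : 0 < l₀) (hpl₀ : 0 < p (-l₀))
    (hmom : ∫⁻ x in Ioi (0:ℝ), ENNReal.ofReal (x * J1 x) = ⊤) :
    (∀ l > l₀, (∫ x in Icc (-l) (-l₀), ∫ y in Ioc (0:ℝ) l, J1 (x - y)) ≥
        ∫ y in Icc l₀ l, J1 y * (y - l₀)) ∧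
      ∫⁻ x in Iio (0:ℝ), ∫⁻ y in Ioi (0:ℝ), ENNReal.ofReal (J1 (x - y) * p x) = ⊤ :=
  ⟨fun _ hl => setIntegral_mul_sub_le_setIntegral_setIntegral hJc hJnn hJeven hl₀.le hl.le,
    setLIntegral_Iio_setLIntegral_Ioi_eq_top hJc.measurable
      (.of_integral_ne_zero (hJint ▸ one_ne_zero)) hJeven hpanti hl₀.le hpl₀ hmom⟩

theorem stmt_13 (J1 : ℝ → ℝ) (hJc : Continuous J1) (hJb : ∃ C, ∀ x, J1 x ≤ C)
    (hJnn : ∀ x, 0 ≤ J1 x) (hJeven : ∀ x, J1 (-x) = J1 x) (hJint : ∫ x, J1 x = 1)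
    (p : ℝ → ℝ) (hpc : ContinuousOn p (Iic 0)) (hpnn : ∀ x ≤ (0:ℝ), 0 ≤ p x)
    (hpanti : AntitoneOn p (Iic 0)) (hppos : ∀ x < (0:ℝ), 0 < p x)
    (l₀ : ℝ) (hl₀ : 0 < l₀) (hpl₀ : 0 < p (-l₀))
    (hmom : ∫⁻ x in Ioi (0:ℝ), ENNReal.ofReal (x * J1 x) = ⊤) :
    (∀ l > l₀, (∫ x in Icc (-l) (-l₀), ∫ y in Ioc (0:ℝ) l, J1 (x - y)) ≥
        ∫ y in Icc l₀ l, J1 y * (y - l₀)) ∧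
      ∫⁻ x in Iio (0:ℝ), ∫⁻ y in Ioi (0:ℝ), ENNReal.ofReal (J1 (x - y) * p x) = ⊤ :=
  stmt_13_general J1 hJc hJnn hJeven hJint p hpanti l₀ hl₀ hpl₀ hmom
end

section
/- Let u, v : [0,∞) → ℝ be the solution of the ODE system u' = -au + H(v), v' = -bv + G(u) with u(0), v(0) > 0, where a, b > 0 and H, G satisfy (H1). If R₀ = H'(0)G'(0)/(ab) < 1, then (u(t), v(t)) → (0,0) as t → ∞; if R₀ > 1, then (u(t), v(t)) → (U, V), the unique positive equilibrium. -/
/-!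
Write `ū, v̄` for the limits superior and `u̲, v̲` for the limits inferior of the solution.
Positivity and boundedness come from invariant rectangles: `(0, 0)` is a subsolution and the
dilates of `(H ẑ / a, ẑ)` are supersolutions, since `H z / z` and `G z / z` do not increase.
Comparing `u' = -a u + H v` with a linear equation gives the fluctuation inequalities
`a ū ≤ H v̄`, `b v̄ ≤ G ū`, `H v̲ ≤ a u̲`, `G u̲ ≤ b v̲`.

If `R₀ < 1`, then `H z ≤ H'(0) z` and `G z ≤ G'(0) z` give `a b ū ≤ H'(0) G'(0) ū`, so `ū = v̄ = 0`.
If `R₀ > 1`, then `θ z = G (H z / a) / z` is strictly decreasing, tends to `H'(0) G'(0) / a > b`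
at `0⁺` and is below `b` at `ẑ`, so it crosses `b` at exactly one `V`, giving the unique
equilibrium `(H V / a, V)`. Small multiples of it are subsolutions, so `v̲ > 0`, and the fluctuation
inequalities then read `θ v̄ ≥ b ≥ θ v̲`, which forces `v̲ = v̄ = V`.
-/

open Set Filter Topology Real

theorem sub_le_mul_exp_of_hasDerivAt_le {f f' : ℝ → ℝ} {c M T S : ℝ} (hTS : T ≤ S)
    (hf : ∀ t ∈ Icc T S, HasDerivAt f (f' t) t) (hbound : ∀ t ∈ Ico T S, f' t ≤ -c * (f t - M)) :
    f S - M ≤ (f T - M) * exp (-c * (S - T)) := by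
  have := le_gronwallBound_of_liminf_deriv_right_le (f := fun t => f t - M) (K := -c) (ε := 0)
    (fun t ht => ((hf t ht).sub_const M).continuousAt.continuousWithinAt)
    (fun t ht _ hr =>
      ((hf t (Ico_subset_Icc_self ht)).sub_const M).hasDerivWithinAt.liminf_right_slope_le hr)
    le_rfl (fun t ht => by simpa using hbound t ht) S ⟨hTS, le_rfl⟩
  rwa [gronwallBound_ε0] at this

theorem forall_lt_and_lt_of_deriv_le {a b P Q : ℝ} {u v u' v' : ℝ → ℝ}
    (hu : ∀ t ≥ 0, HasDerivAt u (u' t) t) (hv : ∀ t ≥ 0, HasDerivAt v (v' t) t)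
    (hu' : ∀ t ≥ 0, v t < Q → u' t ≤ -a * (u t - P))
    (hv' : ∀ t ≥ 0, u t < P → v' t ≤ -b * (v t - Q))
    (hu₀ : u 0 < P) (hv₀ : v 0 < Q) : ∀ t ≥ 0, u t < P ∧ v t < Q := by
  by_contra! hexit
  set B := Ici 0 ∩ u ⁻¹' Ici P ∪ Ici 0 ∩ v ⁻¹' Ici Q
  have huc : ContinuousOn u (Ici 0) := fun t ht => (hu t ht).continuousAt.continuousWithinAt
  have hvc : ContinuousOn v (Ici 0) := fun t ht => (hv t ht).continuousAt.continuousWithinAt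
  have hB : IsClosed B := (huc.preimage_isClosed_of_isClosed isClosed_Ici isClosed_Ici).union
    (hvc.preimage_isClosed_of_isClosed isClosed_Ici isClosed_Ici)
  have hBne : B.Nonempty := by
    obtain ⟨t, ht, h⟩ := hexit
    by_cases hut : u t < P
    · exact ⟨t, .inr ⟨ht, h hut⟩⟩
    · exact ⟨t, .inl ⟨ht, not_lt.1 hut⟩⟩
  have hbdd : BddBelow B := ⟨0, fun t ht => ht.elim (·.1) (·.1)⟩
  set T := sInf B
  have hTB : T ∈ B := hB.csInf_mem hBne hbdd
  have hT0 : 0 ≤ T := hTB.elim (·.1) (·.1)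
  have before : ∀ t ∈ Ico 0 T, u t < P ∧ v t < Q := by
    intro t ht
    by_contra! h
    refine (csInf_le hbdd ?_).not_gt ht.2
    by_cases hut : u t < P
    · exact .inr ⟨ht.1, h hut⟩
    · exact .inl ⟨ht.1, not_lt.1 hut⟩
  -- before the exit time `T` each component obeys its own linear differential inequality
  have stays : ∀ {f f' : ℝ → ℝ} {c K : ℝ}, (∀ t ≥ 0, HasDerivAt f (f' t) t) →
      (∀ t ∈ Ico 0 T, f' t ≤ -c * (f t - K)) → f 0 < K → f T < K := by
    intro f f' c K hf hb h0
    have := sub_le_mul_exp_of_hasDerivAt_le hT0 (fun t ht => hf t ht.1) hb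
    nlinarith [exp_pos (-c * (T - 0))]
  rcases hTB with ⟨-, hT⟩ | ⟨-, hT⟩
  · exact (stays hu (fun t ht => hu' t ht.1 (before t ht).2) hu₀).not_ge hT
  · exact (stays hv (fun t ht => hv' t ht.1 (before t ht).1) hv₀).not_ge hT

theorem eventually_lt_of_deriv_le {f f' : ℝ → ℝ} {c M M' : ℝ} (hc : 0 < c) (hM : M < M')
    (hf : ∀ᶠ t in atTop, HasDerivAt f (f' t) t)
    (hbound : ∀ᶠ t in atTop, f' t ≤ -c * (f t - M)) :
    ∀ᶠ t in atTop, f t < M' := by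
  obtain ⟨T, hT⟩ := eventually_atTop.1 (hf.and hbound)
  have hdecay : Tendsto (fun t => (f T - M) * exp (-c * (t - T))) atTop (𝓝 0) := by
    have hlin := (tendsto_atTop_add_const_right _ (-T) tendsto_id).const_mul_atTop_of_neg
      (neg_lt_zero.2 hc)
    simpa [sub_eq_add_neg] using (tendsto_exp_atBot.comp hlin).const_mul (f T - M)
  filter_upwards [hdecay.eventually_lt_const (sub_pos.2 hM), eventually_ge_atTop T] with t ht hTt
  have :=
    sub_le_mul_exp_of_hasDerivAt_le hTt (fun s hs => (hT s hs.1).1) (fun s hs => (hT s hs.1).2)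
  linarith

theorem mul_limsup_le_of_hasDerivAt {u u' : ℝ → ℝ} {a M : ℝ} (ha : 0 < a)
    (hu : ∀ᶠ t in atTop, HasDerivAt u (u' t) t) (hu' : ∀ᶠ t in atTop, u' t ≤ -(a * u t) + M)
    (hbdd : IsBoundedUnder (· ≥ ·) atTop u) : a * limsup u atTop ≤ M := by
  rw [← le_div_iff₀' ha]
  refine le_of_forall_gt_imp_ge_of_dense fun c hc => limsup_le_of_le hbdd.isCoboundedUnder_le ?_
  refine (eventually_lt_of_deriv_le ha hc hu (hu'.mono fun t ht => ?_)).mono fun _ => le_of_lt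
  have := mul_div_cancel₀ M ha.ne'
  linarith

theorem le_mul_liminf_of_hasDerivAt {u u' : ℝ → ℝ} {a M : ℝ} (ha : 0 < a)
    (hu : ∀ᶠ t in atTop, HasDerivAt u (u' t) t) (hu' : ∀ᶠ t in atTop, -(a * u t) + M ≤ u' t)
    (hbdd : IsBoundedUnder (· ≤ ·) atTop u) : M ≤ a * liminf u atTop := by
  rw [← div_le_iff₀' ha]
  refine le_of_forall_lt_imp_le_of_dense fun c hc => le_liminf_of_le hbdd.isCoboundedUnder_ge ?_
  refine (eventually_lt_of_deriv_le (f := fun t => -u t) ha (neg_lt_neg hc)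
    (hu.mono fun t h => h.neg) (hu'.mono fun t ht => ?_)).mono fun _ h => (neg_lt_neg_iff.1 h).le
  have := mul_div_cancel₀ M ha.ne'
  linarith

theorem mul_limsup_le_map_limsup {a : ℝ} {F u u' v : ℝ → ℝ} (ha : 0 < a)
    (hF : MonotoneOn F (Ici 0)) (hFc : ContinuousOn F (Ici 0))
    (hu : ∀ᶠ t in atTop, HasDerivAt u (u' t) t) (hu' : ∀ᶠ t in atTop, u' t ≤ -(a * u t) + F (v t))
    (hv : ∀ᶠ t in atTop, 0 ≤ v t) (hvb : IsBoundedUnder (· ≤ ·) atTop v)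
    (hub : IsBoundedUnder (· ≥ ·) atTop u) :
    a * limsup u atTop ≤ F (limsup v atTop) := by
  have hL : 0 ≤ limsup v atTop := le_limsup_of_frequently_le hv.frequently hvb
  have hQ : ∀ Q > limsup v atTop, a * limsup u atTop ≤ F Q := fun Q hQ =>
    mul_limsup_le_of_hasDerivAt ha hu (((eventually_lt_of_limsup_lt hQ hvb).and (hv.and hu')).mono
      fun t ⟨hlt, h0, ht⟩ => ht.trans (add_le_add_right (hF h0 (h0.trans hlt.le) hlt.le) _)) hub
  exact ge_of_tendsto ((hFc _ hL).mono (Ioi_subset_Ici hL)) (eventually_mem_nhdsWithin.mono hQ)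

theorem map_liminf_le_mul_liminf {a : ℝ} {F u u' v : ℝ → ℝ} (ha : 0 < a)
    (hF : MonotoneOn F (Ici 0)) (hFc : ContinuousOn F (Ici 0))
    (hu : ∀ᶠ t in atTop, HasDerivAt u (u' t) t) (hu' : ∀ᶠ t in atTop, -(a * u t) + F (v t) ≤ u' t)
    (hv : ∀ᶠ t in atTop, 0 ≤ v t) (hvb : IsBoundedUnder (· ≤ ·) atTop v)
    (hub : IsBoundedUnder (· ≤ ·) atTop u) :
    F (liminf v atTop) ≤ a * liminf u atTop := by
  have hQ : ∀ Q ∈ Ico 0 (liminf v atTop), F Q ≤ a * liminf u atTop := fun Q hQ =>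
    le_mul_liminf_of_hasDerivAt ha hu
      (((eventually_lt_of_lt_liminf hQ.2 (isBoundedUnder_of_eventually_ge hv)).and hu').mono
        fun t ⟨hlt, ht⟩ => (add_le_add_right (hF hQ.1 (hQ.1.trans hlt.le) hlt.le) _).trans ht) hub
  rcases (le_liminf_of_le hvb.isCoboundedUnder_ge hv).eq_or_lt with hL | hL
  · exact hL ▸ le_mul_liminf_of_hasDerivAt ha hu ((hv.and hu').mono
      fun t ⟨h0, ht⟩ => (add_le_add_right (hF self_mem_Ici h0 h0) _).trans ht) hub
  · exact le_of_tendsto ((hFc.continuousAt (Ici_mem_nhds hL)).tendsto.mono_left nhdsWithin_le_nhds)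
      (mem_of_superset (Ico_mem_nhdsLT hL) hQ)

theorem strictMonoOn_Ici_of_hasDerivWithinAt_pos {f f' : ℝ → ℝ} {x₀ : ℝ}
    (hf : ∀ x ∈ Ici x₀, HasDerivWithinAt f (f' x) (Ici x₀) x) (hf' : ∀ x ∈ Ici x₀, 0 < f' x) :
    StrictMonoOn f (Ici x₀) := by
  refine strictMonoOn_of_hasDerivWithinAt_pos (convex_Ici x₀)
    (fun x hx => (hf x hx).continuousWithinAt) (fun x hx => ?_) (fun x hx => hf' x (interior_subset hx))
  rw [interior_Ici] at hx ⊢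
  exact (hf x (mem_Ici.2 (le_of_lt hx))).mono Ioi_subset_Ici_self

theorem map_pos_of_strictMonoOn {f : ℝ → ℝ} (hf : StrictMonoOn f (Ici 0)) (hf0 : f 0 = 0) {z : ℝ}
    (hz : 0 < z) : 0 < f z :=
  hf0 ▸ hf self_mem_Ici hz.le hz

theorem tendsto_div_of_hasDerivWithinAt_Ici {f : ℝ → ℝ} {f' : ℝ}
    (hf : HasDerivWithinAt f f' (Ici 0) 0) (hf0 : f 0 = 0) :
    Tendsto (fun z => f z / z) (𝓝[>] 0) (𝓝 f') := by
  refine ((hasDerivWithinAt_iff_tendsto_slope' (s := Ioi 0) (lt_irrefl 0)).1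
    (hasDerivWithinAt_Ioi_iff_Ici.2 hf)).congr fun z => ?_
  simp [slope_def_field, hf0]

theorem le_mul_of_antitoneOn_div {f : ℝ → ℝ} {L : ℝ} (hf : AntitoneOn (fun z => f z / z) (Ioi 0))
    (hL : Tendsto (fun z => f z / z) (𝓝[>] 0) (𝓝 L)) (hf0 : f 0 = 0) {z : ℝ} (hz : 0 ≤ z) :
    f z ≤ L * z := by
  rcases hz.eq_or_lt with rfl | hz
  · simp [hf0]
  have : f z / z ≤ L :=
    ge_of_tendsto hL (mem_of_superset (Ioo_mem_nhdsGT hz) fun w hw => hf hw.1 hz hw.2.le)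
  rwa [div_le_iff₀ hz] at this

theorem map_mul_le_mul_map {f : ℝ → ℝ} (hf : AntitoneOn (fun z => f z / z) (Ioi 0)) {x l : ℝ}
    (hx : 0 < x) (hl : 1 ≤ l) : f (l * x) ≤ l * f x := by
  have hlx : 0 < l * x := by positivity
  have := hf hx hlx (le_mul_of_one_le_left hx.le hl)
  rw [div_le_div_iff₀ hlx hx] at this
  nlinarith

theorem mul_map_le_map_mul {f : ℝ → ℝ} (hf : AntitoneOn (fun z => f z / z) (Ioi 0)) {x l : ℝ}
    (hx : 0 < x) (hl₀ : 0 < l) (hl₁ : l ≤ 1) : l * f x ≤ f (l * x) := by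
  have hlx : 0 < l * x := by positivity
  have := hf hlx hx (mul_le_of_le_one_left hx.le hl₁)
  rw [div_le_div_iff₀ hx hlx] at this
  nlinarith

section System

variable {a b : ℝ} {H G u v : ℝ → ℝ}

theorem lt_and_lt_of_subsolution {p q : ℝ} (hH : MonotoneOn H (Ici 0)) (hG : MonotoneOn G (Ici 0))
    (hu : ∀ t ≥ 0, HasDerivAt u (-(a * u t) + H (v t)) t)
    (hv : ∀ t ≥ 0, HasDerivAt v (-(b * v t) + G (u t)) t)
    (hp : 0 ≤ p) (hq : 0 ≤ q) (hpq : a * p ≤ H q) (hqp : b * q ≤ G p)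
    (hu₀ : p < u 0) (hv₀ : q < v 0) : ∀ t ≥ 0, p < u t ∧ q < v t := by
  have := forall_lt_and_lt_of_deriv_le (a := a) (b := b) (P := -p) (Q := -q)
    (u := fun t => -u t) (v := fun t => -v t)
    (fun t ht => (hu t ht).neg) (fun t ht => (hv t ht).neg) (fun t _ hvt => ?_) (fun t _ hut => ?_)
    (neg_lt_neg hu₀) (neg_lt_neg hv₀)
  · exact fun t ht => (this t ht).imp neg_lt_neg_iff.1 neg_lt_neg_iff.1
  · have := hH hq (hq.trans (neg_lt_neg_iff.1 hvt).le) (neg_lt_neg_iff.1 hvt).le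
    linarith
  · have := hG hp (hp.trans (neg_lt_neg_iff.1 hut).le) (neg_lt_neg_iff.1 hut).le
    linarith

theorem lt_and_lt_of_supersolution {P Q : ℝ} (hH : MonotoneOn H (Ici 0)) (hG : MonotoneOn G (Ici 0))
    (hu : ∀ t ≥ 0, HasDerivAt u (-(a * u t) + H (v t)) t)
    (hv : ∀ t ≥ 0, HasDerivAt v (-(b * v t) + G (u t)) t)
    (hpos : ∀ t ≥ 0, 0 ≤ u t ∧ 0 ≤ v t) (hPQ : H Q ≤ a * P) (hQP : G P ≤ b * Q)
    (hu₀ : u 0 < P) (hv₀ : v 0 < Q) : ∀ t ≥ 0, u t < P ∧ v t < Q := by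
  refine forall_lt_and_lt_of_deriv_le (a := a) (b := b) hu hv (fun t ht hvt => ?_)
    (fun t ht hut => ?_) hu₀ hv₀
  · have := hH (hpos t ht).2 ((hpos t ht).2.trans hvt.le) hvt.le
    linarith
  · have := hG (hpos t ht).1 ((hpos t ht).1.trans hut.le) hut.le
    linarith

theorem isBoundedUnder_of_supersolution {z : ℝ} (ha : 0 < a) (hz : 0 < z) (hHz : 0 < H z)
    (hH : MonotoneOn H (Ici 0)) (hG : MonotoneOn G (Ici 0))
    (hHs : AntitoneOn (fun z => H z / z) (Ioi 0)) (hGs : AntitoneOn (fun z => G z / z) (Ioi 0))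
    (hu : ∀ t ≥ 0, HasDerivAt u (-(a * u t) + H (v t)) t)
    (hv : ∀ t ≥ 0, HasDerivAt v (-(b * v t) + G (u t)) t)
    (hpos : ∀ t ≥ 0, 0 ≤ u t ∧ 0 ≤ v t) (hGHz : G (H z / a) ≤ b * z) :
    IsBoundedUnder (· ≤ ·) atTop u ∧ IsBoundedUnder (· ≤ ·) atTop v := by
  have hP : 0 < H z / a := div_pos hHz ha
  obtain ⟨l, hl, hlu, hlv⟩ := ((eventually_ge_atTop 1).and
    (((tendsto_id.atTop_mul_const hP).eventually_gt_atTop (u 0)).and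
      ((tendsto_id.atTop_mul_const hz).eventually_gt_atTop (v 0)))).exists
  have hbound := lt_and_lt_of_supersolution (P := l * (H z / a)) (Q := l * z) hH hG hu hv hpos
    ((map_mul_le_mul_map hHs hz hl).trans_eq (by field_simp))
    ((map_mul_le_mul_map hGs hP hl).trans (by nlinarith)) hlu hlv
  exact ⟨isBoundedUnder_of_eventually_le (eventually_atTop.2 ⟨0, fun t ht => (hbound t ht).1.le⟩),
    isBoundedUnder_of_eventually_le (eventually_atTop.2 ⟨0, fun t ht => (hbound t ht).2.le⟩)⟩

theorem exists_pos_forall_lt_of_equilibrium {U V : ℝ} (hU : 0 < U) (hV : 0 < V)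
    (hH : MonotoneOn H (Ici 0)) (hG : MonotoneOn G (Ici 0))
    (hHs : AntitoneOn (fun z => H z / z) (Ioi 0)) (hGs : AntitoneOn (fun z => G z / z) (Ioi 0))
    (hUV : a * U = H V) (hVU : b * V = G U)
    (hu : ∀ t ≥ 0, HasDerivAt u (-(a * u t) + H (v t)) t)
    (hv : ∀ t ≥ 0, HasDerivAt v (-(b * v t) + G (u t)) t)
    (hu₀ : 0 < u 0) (hv₀ : 0 < v 0) : ∃ e > 0, ∀ t ≥ 0, e * U < u t ∧ e * V < v t := by
  have hsmall : ∀ᶠ e in 𝓝[>] 0, e ≤ 1 ∧ e * U < u 0 ∧ e * V < v 0 := by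
    have hlin : ∀ W : ℝ, Tendsto (fun e => e * W) (𝓝[>] 0) (𝓝 0) := fun W => by
      simpa using (tendsto_id.mul_const W).mono_left (nhdsWithin_le_nhds (a := (0 : ℝ)))
    exact (eventually_of_mem (Ioc_mem_nhdsGT one_pos) fun e he => he.2).and
      (((hlin U).eventually_lt_const hu₀).and ((hlin V).eventually_lt_const hv₀))
  obtain ⟨e, ⟨he₁, heU, heV⟩, he⟩ := (hsmall.and self_mem_nhdsWithin).exists
  refine ⟨e, he, lt_and_lt_of_subsolution hH hG hu hv (by positivity) (by positivity) ?_ ?_ heU heV⟩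
  · rw [mul_left_comm, hUV]
    exact mul_map_le_map_mul hHs hV he he₁
  · rw [mul_left_comm, hVU]
    exact mul_map_le_map_mul hGs hU he he₁

theorem tendsto_zero_of_mul_lt_mul {h g : ℝ} (ha : 0 < a) (hb : 0 < b)
    (hH : ∀ z ≥ 0, H z ≤ h * z) (hG : ∀ z ≥ 0, G z ≤ g * z) (hh : 0 ≤ h) (hg : 0 ≤ g)
    (hhg : h * g < a * b)
    (hu : ∀ᶠ t in atTop, HasDerivAt u (-(a * u t) + H (v t)) t)
    (hv : ∀ᶠ t in atTop, HasDerivAt v (-(b * v t) + G (u t)) t)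
    (hu₀ : ∀ᶠ t in atTop, 0 ≤ u t) (hv₀ : ∀ᶠ t in atTop, 0 ≤ v t)
    (hub : IsBoundedUnder (· ≤ ·) atTop u) (hvb : IsBoundedUnder (· ≤ ·) atTop v) :
    Tendsto (fun t => (u t, v t)) atTop (𝓝 (0, 0)) := by
  have hlin : ∀ {c : ℝ}, 0 ≤ c → MonotoneOn (c * ·) (Ici 0) := fun hc _ _ _ _ hxy =>
    mul_le_mul_of_nonneg_left hxy hc
  have hsu := mul_limsup_le_map_limsup ha (hlin hh) (continuous_const_mul h).continuousOn hu
    (hv₀.mono fun t ht => add_le_add_right (hH _ ht) _) hv₀ hvb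
    (isBoundedUnder_of_eventually_ge hu₀)
  have hsv := mul_limsup_le_map_limsup hb (hlin hg) (continuous_const_mul g).continuousOn hv
    (hu₀.mono fun t ht => add_le_add_right (hG _ ht) _) hu₀ hub
    (isBoundedUnder_of_eventually_ge hv₀)
  have hu0 : 0 ≤ limsup u atTop := le_limsup_of_frequently_le hu₀.frequently hub
  have hv0 : 0 ≤ limsup v atTop := le_limsup_of_frequently_le hv₀.frequently hvb
  -- `a b ū ≤ b h v̄ ≤ h g ū` with `h g < a b`
  have hu_lim : limsup u atTop ≤ 0 := by
    nlinarith [mul_le_mul_of_nonneg_left hsu hb.le, mul_le_mul_of_nonneg_left hsv hh]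
  have hv_lim : limsup v atTop ≤ 0 := by nlinarith
  have hconv : ∀ {w : ℝ → ℝ}, (∀ᶠ t in atTop, 0 ≤ w t) → IsBoundedUnder (· ≤ ·) atTop w →
      limsup w atTop ≤ 0 → Tendsto w atTop (𝓝 0) := fun h0 hwb hw =>
    tendsto_of_le_liminf_of_limsup_le (le_liminf_of_le hwb.isCoboundedUnder_ge h0) hw hwb
      (isBoundedUnder_of_eventually_ge h0)
  exact (hconv hu₀ hub hu_lim).prodMk_nhds (hconv hv₀ hvb hv_lim)

theorem strictAntiOn_map_comp_div (ha : 0 < a) (hH : StrictMonoOn H (Ici 0)) (hH0 : H 0 = 0)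
    (hHs : AntitoneOn (fun z => H z / z) (Ioi 0)) (hG : StrictMonoOn G (Ici 0)) (hG0 : G 0 = 0)
    (hGs : StrictAntiOn (fun z => G z / z) (Ioi 0)) :
    StrictAntiOn (fun z => G (H z / a) / z) (Ioi 0) := by
  have hHz : ∀ z > 0, 0 < H z := fun z hz => map_pos_of_strictMonoOn hH hH0 hz
  have hw : ∀ z > 0, 0 < H z / a := fun z hz => div_pos (hHz z hz) ha
  -- the slope of `G` at `H z / a` times the slope of `H` at `z`
  have hfac : ∀ z > 0, G (H z / a) / z = G (H z / a) / (H z / a) * (H z / z) / a := fun z hz => by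
    field_simp [(hHz z hz).ne']
  intro x hx y hy hxy
  simp only [hfac x hx, hfac y hy]
  refine div_lt_div_of_pos_right (mul_lt_mul ?_ (hHs hx hy hxy.le)
    (div_pos (hHz y hy) hy)
    (div_pos (map_pos_of_strictMonoOn hG hG0 (hw x hx)) (hw x hx)).le) ha
  exact hGs (hw x hx) (hw y hy)
    (div_lt_div_of_pos_right (hH (mem_Ici.2 (le_of_lt hx)) (mem_Ici.2 (le_of_lt hy)) hxy) ha)

theorem exists_pos_map_comp_div_eq {h g z : ℝ} (ha : 0 < a) (hH : MonotoneOn H (Ici 0))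
    (hH0 : H 0 = 0) (hG0 : G 0 = 0) (hHc : ContinuousOn H (Ici 0)) (hGc : ContinuousOn G (Ici 0))
    (hHd : HasDerivWithinAt H h (Ici 0) 0) (hGd : HasDerivWithinAt G g (Ici 0) 0)
    (hab : a * b < h * g) (hz : 0 < z) (hGHz : G (H z / a) < b * z) :
    ∃ V > 0, G (H V / a) = b * V := by
  have hmaps : MapsTo (fun z => H z / a) (Ici 0) (Ici 0) := fun z hz =>
    div_nonneg (hH0 ▸ hH self_mem_Ici hz hz) ha.le
  have hlim : Tendsto (fun z => G (H z / a) / z) (𝓝[>] 0) (𝓝 (g * (h / a))) :=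
    tendsto_div_of_hasDerivWithinAt_Ici (f := G ∘ fun z => H z / a)
      ((by simpa [hH0] using hGd : HasDerivWithinAt G g (Ici 0) (H 0 / a)).comp 0
        (hHd.div_const a) hmaps) (by simp [hH0, hG0])
  have hcont : ContinuousOn (fun z => G (H z / a) / z) (Ioi 0) :=
    ((hGc.comp (hHc.div_const a) hmaps).mono Ioi_subset_Ici_self).div continuousOn_id
      fun z hz => ne_of_gt hz
  have hbL : b < g * (h / a) := by
    rw [mul_div_assoc', lt_div_iff₀ ha]
    linarith
  obtain ⟨w, hbw, hw⟩ := ((hlim.eventually_const_lt hbL).and (Ioo_mem_nhdsGT hz)).exists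
  obtain ⟨V, hV, hVb⟩ := intermediate_value_Icc' hw.2.le
    (hcont.mono fun x hx => hw.1.trans_le hx.1) ⟨((div_lt_iff₀ hz).2 hGHz).le, hbw.le⟩
  exact ⟨V, hw.1.trans_le hV.1, (div_eq_iff (hw.1.trans_le hV.1).ne').1 hVb⟩

theorem equilibrium_eq_of_injOn {U V U' V' : ℝ} (ha : a ≠ 0)
    (hθ : InjOn (fun z => G (H z / a) / z) (Ioi 0)) (hV : 0 < V) (hV' : 0 < V')
    (hUV : a * U = H V) (hVU : b * V = G U) (hUV' : a * U' = H V') (hVU' : b * V' = G U') :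
    U' = U ∧ V' = V := by
  have hθb : ∀ {U V : ℝ}, 0 < V → a * U = H V → b * V = G U → G (H V / a) / V = b :=
    fun hV hUV hVU => by
      rw [← hUV, mul_div_cancel_left₀ _ ha, ← hVU, mul_div_cancel_right₀ _ hV.ne']
  have hVV : V' = V := hθ hV' hV ((hθb hV' hUV' hVU').trans (hθb hV hUV hVU).symm)
  refine ⟨mul_left_cancel₀ ha ?_, hVV⟩
  rw [hUV, hUV', hVV]

theorem tendsto_equilibrium {U V : ℝ} (ha : 0 < a) (hb : 0 < b)
    (hH : MonotoneOn H (Ici 0)) (hHc : ContinuousOn H (Ici 0)) (hH0 : H 0 = 0)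
    (hG : MonotoneOn G (Ici 0)) (hGc : ContinuousOn G (Ici 0))
    (hθ : StrictAntiOn (fun z => G (H z / a) / z) (Ioi 0)) (hV : 0 < V)
    (hUV : a * U = H V) (hVU : b * V = G U)
    (hu : ∀ᶠ t in atTop, HasDerivAt u (-(a * u t) + H (v t)) t)
    (hv : ∀ᶠ t in atTop, HasDerivAt v (-(b * v t) + G (u t)) t)
    (hu₀ : ∀ᶠ t in atTop, 0 ≤ u t) (hv₀ : ∀ᶠ t in atTop, 0 ≤ v t)
    (hub : IsBoundedUnder (· ≤ ·) atTop u) (hvb : IsBoundedUnder (· ≤ ·) atTop v)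
    (hpers : 0 < liminf v atTop) :
    Tendsto (fun t => (u t, v t)) atTop (𝓝 (U, V)) := by
  have hub' := isBoundedUnder_of_eventually_ge hu₀
  have hvb' := isBoundedUnder_of_eventually_ge hv₀
  have hsu : a * limsup u atTop ≤ H (limsup v atTop) :=
    mul_limsup_le_map_limsup ha hH hHc hu (.of_forall fun _ => le_rfl) hv₀ hvb hub'
  have hsv : b * limsup v atTop ≤ G (limsup u atTop) :=
    mul_limsup_le_map_limsup hb hG hGc hv (.of_forall fun _ => le_rfl) hu₀ hub hvb'
  have hiu : H (liminf v atTop) ≤ a * liminf u atTop :=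
    map_liminf_le_mul_liminf ha hH hHc hu (.of_forall fun _ => le_rfl) hv₀ hvb hub
  have hiv : G (liminf u atTop) ≤ b * liminf v atTop :=
    map_liminf_le_mul_liminf hb hG hGc hv (.of_forall fun _ => le_rfl) hu₀ hub hvb
  have hu0 : 0 ≤ liminf u atTop := le_liminf_of_le hub.isCoboundedUnder_ge hu₀
  have hlim_u : liminf u atTop ≤ limsup u atTop := liminf_le_limsup hub hub'
  have hpos : 0 < limsup v atTop := hpers.trans_le (liminf_le_limsup hvb hvb')
  have hHa : ∀ z ≥ 0, 0 ≤ H z / a := fun z hz => div_nonneg (hH0 ▸ hH self_mem_Ici hz hz) ha.le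
  have hθV : G (H V / a) / V = b := by
    rw [← hUV, mul_div_cancel_left₀ _ ha.ne', ← hVU, mul_div_cancel_right₀ _ hV.ne']
  -- `θ z = G (H z / a) / z` crosses `b` only at `V`
  have hsupV : limsup v atTop ≤ V := by
    refine (hθ.le_iff_ge hV hpos).1 ?_
    rw [hθV, le_div_iff₀ hpos]
    exact hsv.trans (hG (hu0.trans hlim_u) (hHa _ hpos.le) ((le_div_iff₀' ha).2 hsu))
  have hinfV : V ≤ liminf v atTop := by
    refine (hθ.le_iff_ge hpers hV).1 ?_
    rw [hθV, div_le_iff₀ hpers]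
    exact (hG (hHa _ hpers.le) hu0 ((div_le_iff₀' ha).2 hiu)).trans hiv
  have hsupU : limsup u atTop ≤ U :=
    le_of_mul_le_mul_left (hsu.trans (hUV ▸ hH hpos.le hV.le hsupV)) ha
  have hinfU : U ≤ liminf u atTop :=
    le_of_mul_le_mul_left ((hUV ▸ hH hV.le hpers.le hinfV).trans hiu) ha
  exact (tendsto_of_le_liminf_of_limsup_le hinfU hsupU hub hub').prodMk_nhds
    (tendsto_of_le_liminf_of_limsup_le hinfV hsupV hvb hvb')

end System

theorem stmt_15_general (a b : ℝ) (ha : 0 < a) (hb : 0 < b)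
    (H G H' G' : ℝ → ℝ)
    (hH : ∀ z ∈ Ici (0:ℝ), HasDerivWithinAt H (H' z) (Ici 0) z)
    (hG : ∀ z ∈ Ici (0:ℝ), HasDerivWithinAt G (G' z) (Ici 0) z)
    (hH0 : H 0 = 0) (hG0 : G 0 = 0)
    (hH'pos : ∀ z ∈ Ici (0:ℝ), 0 < H' z) (hG'pos : ∀ z ∈ Ici (0:ℝ), 0 < G' z)
    (hHdec : AntitoneOn (fun z => H z / z) (Ioi 0))
    (hGdec : StrictAntiOn (fun z => G z / z) (Ioi 0))
    (hhat : ∃ zh > 0, G (H zh / a) < b * zh)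
    (u v : ℝ → ℝ)
    (hu : ∀ t ≥ (0:ℝ), HasDerivAt u (-(a * u t) + H (v t)) t)
    (hv : ∀ t ≥ (0:ℝ), HasDerivAt v (-(b * v t) + G (u t)) t)
    (hu0 : 0 < u 0) (hv0 : 0 < v 0) :
    (H' 0 * G' 0 / (a * b) < 1 →
      Tendsto (fun t => (u t, v t)) atTop (nhds ((0:ℝ), (0:ℝ)))) ∧
    (1 < H' 0 * G' 0 / (a * b) →
      ∃ U V : ℝ, 0 < U ∧ 0 < V ∧ a * U = H V ∧ b * V = G U ∧
        (∀ U' V' : ℝ, 0 < U' → 0 < V' → a * U' = H V' → b * V' = G U' →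
          U' = U ∧ V' = V) ∧
        Tendsto (fun t => (u t, v t)) atTop (nhds (U, V))) := by
  have hHm := strictMonoOn_Ici_of_hasDerivWithinAt_pos hH hH'pos
  have hGm := strictMonoOn_Ici_of_hasDerivWithinAt_pos hG hG'pos
  have hHc : ContinuousOn H (Ici 0) := fun z hz => (hH z hz).continuousWithinAt
  have hGc : ContinuousOn G (Ici 0) := fun z hz => (hG z hz).continuousWithinAt
  have hpos := lt_and_lt_of_subsolution hHm.monotoneOn hGm.monotoneOn hu hv le_rfl le_rfl
    (by rw [mul_zero, hH0]) (by rw [mul_zero, hG0]) hu0 hv0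
  have hnonneg : ∀ t ≥ 0, 0 ≤ u t ∧ 0 ≤ v t := fun t ht => (hpos t ht).imp le_of_lt le_of_lt
  obtain ⟨zh, hzh, hGHzh⟩ := hhat
  obtain ⟨hub, hvb⟩ := isBoundedUnder_of_supersolution ha hzh (map_pos_of_strictMonoOn hHm hH0 hzh)
    hHm.monotoneOn hGm.monotoneOn hHdec hGdec.antitoneOn hu hv hnonneg hGHzh.le
  have hu' := eventually_atTop.2 ⟨0, hu⟩
  have hv' := eventually_atTop.2 ⟨0, hv⟩
  have hu₀ := eventually_atTop.2 ⟨0, fun t ht => (hnonneg t ht).1⟩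
  have hv₀ := eventually_atTop.2 ⟨0, fun t ht => (hnonneg t ht).2⟩
  refine ⟨fun hR => ?_, fun hR => ?_⟩
  · exact tendsto_zero_of_mul_lt_mul ha hb
      (fun z => le_mul_of_antitoneOn_div hHdec
        (tendsto_div_of_hasDerivWithinAt_Ici (hH 0 self_mem_Ici) hH0) hH0)
      (fun z => le_mul_of_antitoneOn_div hGdec.antitoneOn
        (tendsto_div_of_hasDerivWithinAt_Ici (hG 0 self_mem_Ici) hG0) hG0)
      (hH'pos 0 self_mem_Ici).le (hG'pos 0 self_mem_Ici).le
      ((div_lt_one (by positivity)).1 hR) hu' hv' hu₀ hv₀ hub hvb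
  have hθ := strictAntiOn_map_comp_div ha hHm hH0 hHdec hGm hG0 hGdec
  obtain ⟨V, hV, hVU⟩ := exists_pos_map_comp_div_eq ha hHm.monotoneOn hH0 hG0 hHc hGc
    (hH 0 self_mem_Ici) (hG 0 self_mem_Ici) ((one_lt_div (by positivity)).1 hR) hzh hGHzh
  have hU : 0 < H V / a := div_pos (map_pos_of_strictMonoOn hHm hH0 hV) ha
  have hUV : a * (H V / a) = H V := mul_div_cancel₀ _ ha.ne'
  obtain ⟨e, he, hlow⟩ := exists_pos_forall_lt_of_equilibrium hU hV hHm.monotoneOn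
    hGm.monotoneOn hHdec hGdec.antitoneOn hUV hVU.symm hu hv hu0 hv0
  have hpers : 0 < liminf v atTop := (mul_pos he hV).trans_le <|
    le_liminf_of_le hvb.isCoboundedUnder_ge (eventually_atTop.2 ⟨0, fun t ht => (hlow t ht).2.le⟩)
  exact ⟨H V / a, V, hU, hV, hUV, hVU.symm,
    fun U' V' _ hV' hUV' hVU' =>
      equilibrium_eq_of_injOn ha.ne' hθ.injOn hV hV' hUV hVU.symm hUV' hVU',
    tendsto_equilibrium ha hb hHm.monotoneOn hHc hH0 hGm.monotoneOn hGc hθ hV hUV hVU.symm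
      hu' hv' hu₀ hv₀ hub hvb hpers⟩

theorem stmt_15 (a b : ℝ) (ha : 0 < a) (hb : 0 < b)
    (H G H' G' : ℝ → ℝ)
    (hH : ∀ z ∈ Ici (0:ℝ), HasDerivWithinAt H (H' z) (Ici 0) z)
    (hG : ∀ z ∈ Ici (0:ℝ), HasDerivWithinAt G (G' z) (Ici 0) z)
    (hH'c : ContinuousOn H' (Ici 0)) (hG'c : ContinuousOn G' (Ici 0))
    (hH0 : H 0 = 0) (hG0 : G 0 = 0)
    (hH'pos : ∀ z ∈ Ici (0:ℝ), 0 < H' z) (hG'pos : ∀ z ∈ Ici (0:ℝ), 0 < G' z)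
    (hHdec : AntitoneOn (fun z => H z / z) (Ioi 0))
    (hGdec : StrictAntiOn (fun z => G z / z) (Ioi 0))
    (hhat : ∃ zh > 0, G (H zh / a) < b * zh)
    (u v : ℝ → ℝ)
    (hu : ∀ t ≥ (0:ℝ), HasDerivAt u (-(a * u t) + H (v t)) t)
    (hv : ∀ t ≥ (0:ℝ), HasDerivAt v (-(b * v t) + G (u t)) t)
    (hu0 : 0 < u 0) (hv0 : 0 < v 0) :
    (H' 0 * G' 0 / (a * b) < 1 →
      Tendsto (fun t => (u t, v t)) atTop (nhds ((0:ℝ), (0:ℝ)))) ∧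
    (1 < H' 0 * G' 0 / (a * b) →
      ∃ U V : ℝ, 0 < U ∧ 0 < V ∧ a * U = H V ∧ b * V = G U ∧
        (∀ U' V' : ℝ, 0 < U' → 0 < V' → a * U' = H V' → b * V' = G U' →
          U' = U ∧ V' = V) ∧
        Tendsto (fun t => (u t, v t)) atTop (nhds (U, V))) :=
  stmt_15_general a b ha hb H G H' G' hH hG hH0 hG0 hH'pos hG'pos hHdec hGdec hhat u v hu hv hu0 hv0
end

section
/- Fix d > 0, μ > 0 and a kernel J satisfying (J). There do not exist d̃, μ̃ > 0 and a kernel J̃ satisfying (J) such that for all h₀ > 0 and all u₀ ∈ C([0,h₀]) with u₀(h₀) = 0 < u₀ on [0,h₀), the following two identities hold: (i) d̃∫_0^{h₀}[J̃(h₀-y) + J̃(h₀+y)]u₀(y)dy = d∫_0^{h₀}J(h₀-y)u₀(y)dy, and (ii) μ̃∫_0^{h₀}∫_{h₀}^∞ [J̃(x-y) + J̃(x+y)]u₀(x) dy dx = μ∫_0^{h₀}∫_{h₀}^∞ J(x-y)u₀(x) dy dx. -/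
/-!
Testing identity (i) against the admissible profiles `(C + φ y) (h₀ - y)` and `C (h₀ - y)`,
with `φ` an arbitrary test function and `C` large, turns it into the pointwise identity
`d̃ (J̃ s + J̃ t) = d J s` for all `0 < s < t` (take `h₀ = (s + t)/2`, `y = (t - s)/2`).
Its left side depends on `t` only through `J̃ t`, so `J̃` is constant on `(0, ∞)`, equal to
`J̃ 0 > 0` by continuity; such a kernel is not integrable, contradicting `∫ J̃ = 1`.
-/

open MeasureTheory Set Filter Topology

open scoped ContDiff

theorem eqOn_zero_of_setIntegral_contDiff_mul_eq_zero {a b : ℝ} {g : ℝ → ℝ}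
    (hg : ContinuousOn g (Icc a b))
    (h : ∀ φ : ℝ → ℝ, ContDiff ℝ ∞ φ → HasCompactSupport φ → ∫ x in Ioc a b, φ x * g x = 0) :
    EqOn g 0 (Ioo a b) := by
  have hint : Integrable ((Ioc a b).indicator g) :=
    (hg.integrableOn_Icc.mono_set Ioc_subset_Icc_self).integrable_indicator measurableSet_Ioc
  have hae : (Ioc a b).indicator g =ᵐ[volume] 0 := by
    refine ae_eq_zero_of_integral_contDiff_smul_eq_zero hint.locallyIntegrable fun φ hφ hφs ↦ ?_
    simp_rw [smul_eq_mul, ← indicator_mul_right, integral_indicator measurableSet_Ioc]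
    exact h φ hφ hφs
  have hae' : g =ᵐ[volume.restrict (Ioo a b)] 0 :=
    ae_restrict_of_ae_restrict_of_subset Ioo_subset_Ioc_self
      ((indicator_ae_eq_restrict measurableSet_Ioc).symm.trans (ae_restrict_of_ae hae))
  exact Measure.eqOn_open_of_ae_eq hae' isOpen_Ioo (hg.mono Ioo_subset_Icc_self) continuousOn_const

theorem eqOn_of_setIntegral_mul_eq_of_pos {a b : ℝ} {A B : ℝ → ℝ}
    (hA : ContinuousOn A (Icc a b)) (hB : ContinuousOn B (Icc a b))
    (hAB : ∀ u : ℝ → ℝ, ContinuousOn u (Icc a b) → u b = 0 → (∀ x ∈ Ico a b, 0 < u x) →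
      ∫ y in Ioc a b, A y * u y = ∫ y in Ioc a b, B y * u y) :
    EqOn A B (Ioo a b) := by
  have hL : ∀ u : ℝ → ℝ, ContinuousOn u (Icc a b) → u b = 0 → (∀ x ∈ Ico a b, 0 < u x) →
      ∫ y in Ioc a b, (A y - B y) * u y = 0 := by
    intro u hu hub hupos
    have hint : ∀ F : ℝ → ℝ, ContinuousOn F (Icc a b) →
        IntegrableOn (fun y ↦ F y * u y) (Ioc a b) :=
      fun F hF ↦ ((hF.mul hu).integrableOn_Icc).mono_set Ioc_subset_Icc_self
    simp_rw [sub_mul]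
    rw [integral_sub (hint A hA) (hint B hB), hAB u hu hub hupos, sub_self]
  have hdist : ContinuousOn (fun y ↦ b - y) (Icc a b) := by fun_prop
  have hzero : EqOn (fun y ↦ (A y - B y) * (b - y)) 0 (Ioo a b) := by
    refine eqOn_zero_of_setIntegral_contDiff_mul_eq_zero ((hA.sub hB).mul hdist) fun φ hφ hφs ↦ ?_
    have hφc := hφ.continuous
    obtain ⟨C, hC⟩ := hφs.exists_bound_of_continuous hφc
    have hCpos : 0 < C + 1 := by linarith [(norm_nonneg _).trans (hC 0)]
    have hφC : ∀ x, 0 < C + 1 + φ x := fun x ↦ by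
      linarith [neg_abs_le (φ x), (Real.norm_eq_abs (φ x)) ▸ hC x]
    have h₁ := hL (fun y ↦ (C + 1 + φ y) * (b - y)) (by fun_prop) (by simp)
      fun x hx ↦ mul_pos (hφC x) (sub_pos.2 hx.2)
    have h₂ := hL (fun y ↦ (C + 1) * (b - y)) (by fun_prop) (by simp)
      fun x hx ↦ mul_pos hCpos (sub_pos.2 hx.2)
    have hint : ∀ c : ℝ → ℝ, ContinuousOn c (Icc a b) →
        IntegrableOn (fun y ↦ (A y - B y) * (c y * (b - y))) (Ioc a b) :=
      fun c hc ↦ (((hA.sub hB).mul (hc.mul hdist)).integrableOn_Icc).mono_set Ioc_subset_Icc_self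
    calc ∫ x in Ioc a b, φ x * ((A x - B x) * (b - x))
        = ∫ x in Ioc a b, ((A x - B x) * ((C + 1 + φ x) * (b - x))
            - (A x - B x) * ((C + 1) * (b - x))) := by congr 1; ext x; ring
      _ = 0 := by
        rw [integral_sub (hint _ (by fun_prop)) (hint _ continuousOn_const), h₁, h₂, sub_self]
  intro y hy
  have := hzero hy
  simp only [Pi.zero_apply, mul_eq_zero, sub_eq_zero] at this
  exact this.resolve_right (by linarith [hy.2])

theorem mul_add_eq_of_reflection_identity {d dt : ℝ} {J Jt : ℝ → ℝ}
    (hJ : Continuous J) (hJt : Continuous Jt)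
    (H : ∀ h₀ > 0, ∀ u₀ : ℝ → ℝ, ContinuousOn u₀ (Icc 0 h₀) → u₀ h₀ = 0 →
      (∀ x ∈ Ico 0 h₀, 0 < u₀ x) →
      dt * (∫ y in Ioc (0:ℝ) h₀, (Jt (h₀ - y) + Jt (h₀ + y)) * u₀ y)
        = d * ∫ y in Ioc (0:ℝ) h₀, J (h₀ - y) * u₀ y)
    {s t : ℝ} (hs : 0 < s) (hst : s < t) :
    dt * (Jt s + Jt t) = d * J s := by
  set h₀ := (s + t) / 2 with hh₀
  have hweights : EqOn (fun y ↦ dt * (Jt (h₀ - y) + Jt (h₀ + y))) (fun y ↦ d * J (h₀ - y))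
      (Ioo 0 h₀) := by
    refine eqOn_of_setIntegral_mul_eq_of_pos (by fun_prop) (by fun_prop) fun u hu hu0 hupos ↦ ?_
    simp_rw [mul_assoc, integral_const_mul]
    exact H h₀ (by linarith) u hu hu0 hupos
  have := hweights (show (t - s) / 2 ∈ Ioo 0 h₀ from ⟨by linarith, by linarith⟩)
  simp only [h₀] at this
  rwa [show (s + t) / 2 - (t - s) / 2 = s by ring, show (s + t) / 2 + (t - s) / 2 = t by ring]
    at this

theorem eqOn_Ioi_of_mul_add_eq {c : ℝ} {f g : ℝ → ℝ} (hf : Continuous f) (hc : c ≠ 0)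
    (h : ∀ s t, 0 < s → s < t → c * (f s + f t) = g s) :
    EqOn f (fun _ ↦ f 0) (Ioi 0) := by
  have hconst : ∀ t t', 0 < t → 0 < t' → f t = f t' := by
    intro t t' ht ht'
    have hs : 0 < min t t' / 2 := by positivity
    have h₁ := h _ t hs (by linarith [min_le_left t t'])
    have h₂ := h _ t' hs (by linarith [min_le_right t t'])
    exact add_left_cancel (mul_left_cancel₀ hc (h₁.trans h₂.symm))
  intro t ht
  have hev : f =ᶠ[𝓝[>] 0] fun _ ↦ f t :=
    eventually_nhdsWithin_of_forall fun x hx ↦ hconst x t hx ht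
  exact tendsto_nhds_unique (tendsto_const_nhds.congr' hev.symm)
    (hf.continuousWithinAt (s := Ioi 0)).tendsto

theorem not_integrableOn_Ioi_of_eqOn_const {f : ℝ → ℝ} {a c : ℝ} (hc : c ≠ 0)
    (hf : EqOn f (fun _ ↦ c) (Ioi a)) : ¬ IntegrableOn f (Ioi a) := by
  rw [integrableOn_congr_fun hf measurableSet_Ioi, integrableOn_const_iff]
  simp [hc]

theorem stmt_17_general (d μ : ℝ) (J : ℝ → ℝ) (hJc : Continuous J) :
    ¬ ∃ (dt μt : ℝ) (Jt : ℝ → ℝ), 0 < dt ∧ 0 < μt ∧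
      Continuous Jt ∧ (∃ C, ∀ x, Jt x ≤ C) ∧ (∀ x, 0 ≤ Jt x) ∧ 0 < Jt 0 ∧
      (∀ x, Jt (-x) = Jt x) ∧ (∫ x, Jt x) = 1 ∧
      ∀ h₀ > 0, ∀ u₀ : ℝ → ℝ, ContinuousOn u₀ (Icc 0 h₀) → u₀ h₀ = 0 →
        (∀ x ∈ Ico 0 h₀, 0 < u₀ x) →
        dt * (∫ y in Ioc (0:ℝ) h₀, (Jt (h₀ - y) + Jt (h₀ + y)) * u₀ y)
            = d * ∫ y in Ioc (0:ℝ) h₀, J (h₀ - y) * u₀ y ∧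
          μt * (∫ x in Ioc (0:ℝ) h₀, ∫ y in Ioi h₀, (Jt (x - y) + Jt (x + y)) * u₀ x)
            = μ * ∫ x in Ioc (0:ℝ) h₀, ∫ y in Ioi h₀, J (x - y) * u₀ x := by
  rintro ⟨dt, μt, Jt, hdt, -, hJtc, -, -, hJt0, -, hJtint, H⟩
  have hrefl : ∀ s t, 0 < s → s < t → dt * (Jt s + Jt t) = d * J s := fun s t ↦
    mul_add_eq_of_reflection_identity hJc hJtc fun h₀ hh u₀ hu hu0 hupos ↦
      (H h₀ hh u₀ hu hu0 hupos).1
  have hconst : EqOn Jt (fun _ ↦ Jt 0) (Ioi 0) := eqOn_Ioi_of_mul_add_eq hJtc hdt.ne' hrefl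
  have hint : Integrable Jt := Integrable.of_integral_ne_zero (by rw [hJtint]; exact one_ne_zero)
  exact not_integrableOn_Ioi_of_eqOn_const hJt0.ne' hconst hint.integrableOn

theorem stmt_17 (d μ : ℝ) (hd : 0 < d) (hμ : 0 < μ) (J : ℝ → ℝ)
    (hJc : Continuous J) (hJb : ∃ C, ∀ x, J x ≤ C) (hJnn : ∀ x, 0 ≤ J x)
    (hJ0 : 0 < J 0) (hJeven : ∀ x, J (-x) = J x) (hJint : ∫ x, J x = 1) :
    ¬ ∃ (dt μt : ℝ) (Jt : ℝ → ℝ), 0 < dt ∧ 0 < μt ∧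
      Continuous Jt ∧ (∃ C, ∀ x, Jt x ≤ C) ∧ (∀ x, 0 ≤ Jt x) ∧ 0 < Jt 0 ∧
      (∀ x, Jt (-x) = Jt x) ∧ (∫ x, Jt x) = 1 ∧
      ∀ h₀ > 0, ∀ u₀ : ℝ → ℝ, ContinuousOn u₀ (Icc 0 h₀) → u₀ h₀ = 0 →
        (∀ x ∈ Ico 0 h₀, 0 < u₀ x) →
        dt * (∫ y in Ioc (0:ℝ) h₀, (Jt (h₀ - y) + Jt (h₀ + y)) * u₀ y)
            = d * ∫ y in Ioc (0:ℝ) h₀, J (h₀ - y) * u₀ y ∧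
          μt * (∫ x in Ioc (0:ℝ) h₀, ∫ y in Ioi h₀, (Jt (x - y) + Jt (x + y)) * u₀ x)
            = μ * ∫ x in Ioc (0:ℝ) h₀, ∫ y in Ioi h₀, J (x - y) * u₀ x :=
  stmt_17_general d μ J hJc
end

section
/- Let a, b > 0 and H, G ∈ C²([0,∞)) satisfy (H1) with additionally H'' < 0 and G'' < 0 on [0,∞). Let φ₁, φ₂ > 0 be continuous on [0,l] and M > 0, and define ū(t,x) = M(t+1)^{-k}φ₁(x), with M_i = max φ_i, m_i = min φ_i. Then for k ∈ (0, min{1, -(M m₂²)/(2M₁) · max_{[0,MM₂]} H''}], and for all t > 0 and x ∈ [0,l]: M(t+1)^{-k}( -kφ₁/(t+1) + H'(0)φ₂ - H(M(t+1)^{-k}φ₂)/(M(t+1)^{-k}) ) ≥ 0. -/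
open Set

lemma aux_nonneg (R : ℝ) (f f' : ℝ → ℝ)
    (hf : ∀ z ∈ Icc (0:ℝ) R, HasDerivWithinAt f (f' z) (Icc 0 R) z)
    (hf0 : f 0 = 0) (hf'0 : ∀ z ∈ Icc (0:ℝ) R, 0 ≤ f' z) :
    ∀ y ∈ Icc (0:ℝ) R, 0 ≤ f y := by
  intro y hy
  have hR : (0:ℝ) ≤ R := le_trans hy.1 hy.2
  have hmono : MonotoneOn f (Icc 0 R) :=
    monotoneOn_of_hasDerivWithinAt_nonneg (convex_Icc 0 R)
      (fun z hz => (hf z hz).continuousWithinAt)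
      (fun z hz => (hf z (interior_subset hz)).mono interior_subset)
      (fun z hz => hf'0 z (interior_subset hz))
  have := hmono (left_mem_Icc.2 hR) hy hy.1
  simpa [hf0] using this

theorem stmt_19 (a b l : ℝ) (ha : 0 < a) (hb : 0 < b) (hl : 0 < l)
    (H H' H'' G G' G'' : ℝ → ℝ)
    (hH1 : ∀ z ∈ Ici (0:ℝ), HasDerivWithinAt H (H' z) (Ici 0) z)
    (hH2 : ∀ z ∈ Ici (0:ℝ), HasDerivWithinAt H' (H'' z) (Ici 0) z)
    (hH''c : ContinuousOn H'' (Ici 0))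
    (hG1 : ∀ z ∈ Ici (0:ℝ), HasDerivWithinAt G (G' z) (Ici 0) z)
    (hG2 : ∀ z ∈ Ici (0:ℝ), HasDerivWithinAt G' (G'' z) (Ici 0) z)
    (hG''c : ContinuousOn G'' (Ici 0))
    (hH0 : H 0 = 0) (hG0 : G 0 = 0)
    (hH'pos : ∀ z ∈ Ici (0:ℝ), 0 < H' z) (hG'pos : ∀ z ∈ Ici (0:ℝ), 0 < G' z)
    (hH''neg : ∀ z ∈ Ici (0:ℝ), H'' z < 0) (hG''neg : ∀ z ∈ Ici (0:ℝ), G'' z < 0)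
    (φ₁ φ₂ : ℝ → ℝ)
    (hφ₁c : ContinuousOn φ₁ (Icc 0 l)) (hφ₂c : ContinuousOn φ₂ (Icc 0 l))
    (hφpos : ∀ x ∈ Icc 0 l, 0 < φ₁ x ∧ 0 < φ₂ x)
    (M M₁ M₂ m₂ C : ℝ) (hM : 0 < M)
    (hM₁ : IsGreatest (φ₁ '' Icc 0 l) M₁) (hM₂ : IsGreatest (φ₂ '' Icc 0 l) M₂)
    (hm₂ : IsLeast (φ₂ '' Icc 0 l) m₂)
    (hC : IsGreatest (H'' '' Icc 0 (M * M₂)) C)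
    (k : ℝ) (hk0 : 0 < k) (hk : k ≤ min 1 (-(M * m₂ ^ 2 / (2 * M₁) * C))) :
    ∀ t > (0:ℝ), ∀ x ∈ Icc 0 l,
      0 ≤ M * (t + 1) ^ (-k) *
        (-(k * φ₁ x) / (t + 1) + H' 0 * φ₂ x
          - H (M * (t + 1) ^ (-k) * φ₂ x) / (M * (t + 1) ^ (-k))) := by
  intro t ht x hx
  set R := M * M₂ with hR
  have hsub : Icc (0:ℝ) R ⊆ Ici 0 := fun z hz => hz.1
  -- basic positivity facts
  obtain ⟨hφ₁pos, hφ₂pos⟩ := hφpos x hx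
  have hM₁x : φ₁ x ≤ M₁ := hM₁.2 ⟨x, hx, rfl⟩
  have hM₂x : φ₂ x ≤ M₂ := hM₂.2 ⟨x, hx, rfl⟩
  have hm₂x : m₂ ≤ φ₂ x := hm₂.2 ⟨x, hx, rfl⟩
  have hM₁pos : 0 < M₁ := lt_of_lt_of_le hφ₁pos hM₁x
  have hm₂pos : 0 < m₂ := by
    obtain ⟨x₀, hx₀, hx₀e⟩ := hm₂.1
    exact hx₀e ▸ (hφpos x₀ hx₀).2
  have hCneg : C < 0 := by
    obtain ⟨z, hz, hze⟩ := hC.1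
    exact hze ▸ hH''neg z (hsub hz)
  have ht1 : (1:ℝ) ≤ t + 1 := by linarith
  set p := (t + 1) ^ (-k) with hp
  have hppos : 0 < p := Real.rpow_pos_of_pos (by linarith) _
  have hp1 : p ≤ 1 := Real.rpow_le_one_of_one_le_of_nonpos ht1 (by linarith)
  set ε := M * p with hε
  have hεpos : 0 < ε := mul_pos hM hppos
  have hεM : ε ≤ M := by nlinarith
  -- Step A : H' z ≤ H' 0 + C * z on Icc 0 R
  have stepA : ∀ z ∈ Icc (0:ℝ) R, 0 ≤ H' 0 + C * z - H' z := by
    apply aux_nonneg R _ (fun z => C - H'' z)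
    · intro z hz
      have h1 : HasDerivWithinAt (fun z => H' 0 + C * z - H' z)
          (C * 1 - H'' z) (Icc 0 R) z :=
        (((hasDerivWithinAt_id z _).const_mul C).const_add (H' 0)).sub
          ((hH2 z (hsub hz)).mono hsub)
      simpa using h1
    · simp
    · intro z hz
      have := hC.2 ⟨z, hz, rfl⟩
      linarith
  -- Step B : H y ≤ H' 0 * y + C * y ^ 2 / 2 on Icc 0 R
  have stepB : ∀ y ∈ Icc (0:ℝ) R, 0 ≤ H' 0 * y + C * y ^ 2 / 2 - H y := by
    apply aux_nonneg R _ (fun z => H' 0 + C * z - H' z)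
    · intro z hz
      have h1 : HasDerivWithinAt (fun z => H' 0 * z + C * z ^ 2 / 2 - H z)
          (H' 0 * 1 + C * ((2:ℕ) * z ^ (2 - 1)) / 2 - H' z) (Icc 0 R) z :=
        (((hasDerivWithinAt_id z _).const_mul (H' 0)).add
          (((hasDerivWithinAt_pow 2 z).const_mul C).div_const 2)).sub
          ((hH1 z (hsub hz)).mono hsub)
      convert h1 using 1
      push_cast
      ring
    · simp [hH0]
    · exact stepA
  -- Apply at y = ε * φ₂ x
  have hymem : ε * φ₂ x ∈ Icc (0:ℝ) R := by
    constructor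
    · positivity
    · exact mul_le_mul hεM hM₂x hφ₂pos.le hM.le
  have hB := stepB _ hymem
  have hdiv : H (ε * φ₂ x) / ε ≤ H' 0 * φ₂ x + C * ε * φ₂ x ^ 2 / 2 := by
    rw [div_le_iff₀ hεpos]
    have e : (H' 0 * φ₂ x + C * ε * φ₂ x ^ 2 / 2) * ε
        = H' 0 * (ε * φ₂ x) + C * (ε * φ₂ x) ^ 2 / 2 := by ring
    linarith
  -- key inequality : k * φ₁ x / (t+1) ≤ -(C * ε * φ₂ x ^ 2 / 2)
  have hk1 : k ≤ 1 := le_trans hk (min_le_left _ _)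
  have hk2 : k ≤ -(M * m₂ ^ 2 / (2 * M₁) * C) := le_trans hk (min_le_right _ _)
  have hkM₁ : k * M₁ ≤ M * m₂ ^ 2 * (-C) / 2 := by
    have h := mul_le_mul_of_nonneg_right hk2 hM₁pos.le
    have e : -(M * m₂ ^ 2 / (2 * M₁) * C) * M₁ = M * m₂ ^ 2 * (-C) / 2 := by
      field_simp
    linarith [e ▸ h]
  have hq : ((t + 1):ℝ)⁻¹ ≤ p := by
    have h1 : (t + 1) ^ (-(1:ℝ)) ≤ (t + 1) ^ (-k) :=
      Real.rpow_le_rpow_of_exponent_le ht1 (by linarith)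
    rwa [Real.rpow_neg_one] at h1
  have hkey : k * φ₁ x / (t + 1) ≤ -(C * ε * φ₂ x ^ 2 / 2) := by
    have htinv : 0 < ((t+1):ℝ)⁻¹ := by positivity
    have e1 : k * φ₁ x / (t + 1) = k * φ₁ x * (t+1)⁻¹ := by ring
    rw [e1]
    have c1 : k * φ₁ x * (t+1)⁻¹ ≤ k * M₁ * (t+1)⁻¹ := by
      apply mul_le_mul_of_nonneg_right _ htinv.le
      exact mul_le_mul_of_nonneg_left hM₁x hk0.le
    have c2 : k * M₁ * (t+1)⁻¹ ≤ (M * m₂ ^ 2 * (-C) / 2) * (t+1)⁻¹ :=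
      mul_le_mul_of_nonneg_right hkM₁ htinv.le
    have hnegC : (0:ℝ) ≤ -C := by linarith
    have hsq : m₂ ^ 2 ≤ φ₂ x ^ 2 := pow_le_pow_left₀ hm₂pos.le hm₂x 2
    have c3 : (M * m₂ ^ 2 * (-C) / 2) * (t+1)⁻¹ ≤ (M * φ₂ x ^ 2 * (-C) / 2) * (t+1)⁻¹ := by
      apply mul_le_mul_of_nonneg_right _ htinv.le
      apply div_le_div_of_nonneg_right _ (by norm_num)
      exact mul_le_mul_of_nonneg_right (mul_le_mul_of_nonneg_left hsq hM.le) hnegC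
    have c4 : (M * φ₂ x ^ 2 * (-C) / 2) * (t+1)⁻¹ ≤ (M * φ₂ x ^ 2 * (-C) / 2) * p := by
      apply mul_le_mul_of_nonneg_left hq
      have : (0:ℝ) ≤ M * φ₂ x ^ 2 * (-C) := by positivity
      linarith
    have : (M * φ₂ x ^ 2 * (-C) / 2) * p = -(C * ε * φ₂ x ^ 2 / 2) := by
      rw [hε]; ring
    linarith
  apply mul_nonneg hεpos.le
  have e : -(k * φ₁ x) / (t + 1) = -(k * φ₁ x / (t + 1)) := by ring
  rw [e]
  linarith [hdiv, hkey]
end
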